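/- arXiv:2203.07701 — 6 statements merged into one kernel-verified Lean document; each statement's English description precedes it below -/
import Mathlib

section
/- For every nonnegative integer m and all positive integers k_1,…,k_r, the element x^m y x^{k_1−1} ⋯ y x^{k_r−1} − (−1)^m Σ_{l_1,…,l_r≥0, l_1+⋯+l_r=m} y x^{k_1+l_1−1} ⋯ y x^{k_r+l_r−1} · Π_{j=1}^{r} C(k_j+l_j−1, l_j) of H lies in the ℚ-subspace x ш H = {x ш w : w ∈ H}. -/
open scoped BigOperators

/-- All shuffles of two words, with multiplicity. -/
def shuffles {α : Type*} : List α → List α → List (List α)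
  | [], w => [w]
  | w, [] => [w]
  | a :: w, b :: w' =>
      ((shuffles w (b :: w')).map (a :: ·)) ++ ((shuffles (a :: w) w').map (b :: ·))
termination_by l₁ l₂ => l₁.length + l₂.length

/-- `H = ℚ⟨x,y⟩`, the free noncommutative `ℚ`-algebra on two generators,
realized as the space of finitely supported `ℚ`-valued functions on words
in the alphabet `{x, y} = {0, 1}`. -/
abbrev H : Type := List (Fin 2) →₀ ℚ

/-- The `ℚ`-bilinear shuffle product on `H`. -/
noncomputable def sh (f g : H) : H :=
  f.sum fun w a => g.sum fun w' b =>
    (a * b) • ((shuffles w w').map fun s => Finsupp.single s (1 : ℚ)).sum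

/-- `a :: b :: a :: b :: ⋯` (`n` repetitions of `a, b`). -/
def alt2 {α : Type*} (a b : α) : ℕ → List α
  | 0 => []
  | n + 1 => a :: b :: alt2 a b n

/-- `a :: b :: c :: d :: ⋯` (`n` repetitions of `a, b, c, d`). -/
def alt4 {α : Type*} (a b c d : α) : ℕ → List α
  | 0 => []
  | n + 1 => a :: b :: c :: d :: alt4 a b c d n

/-! auxiliary -/

noncomputable def mapC (b : Fin 2) : H →ₗ[ℚ] H := Finsupp.lmapDomain ℚ ℚ (b :: ·)

noncomputable def mapRep (t : ℕ) : H →ₗ[ℚ] H :=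
  Finsupp.lmapDomain ℚ ℚ (List.replicate t (0 : Fin 2) ++ ·)

noncomputable def cIns (w : List (Fin 2)) : H :=
  ((shuffles [(0 : Fin 2)] w).map fun s => Finsupp.single s (1 : ℚ)).sum

noncomputable def dIns (w : List (Fin 2)) : H :=
  cIns w - Finsupp.single ((0 : Fin 2) :: w) 1

lemma mapC_single (b : Fin 2) (s : List (Fin 2)) :
    mapC b (Finsupp.single s (1 : ℚ)) = Finsupp.single (b :: s) 1 := by
  simp [mapC, Finsupp.lmapDomain_apply, Finsupp.mapDomain_single]

lemma mapRep_single (t : ℕ) (s : List (Fin 2)) :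
    mapRep t (Finsupp.single s (1 : ℚ)) = Finsupp.single (List.replicate t 0 ++ s) 1 := by
  simp [mapRep, Finsupp.lmapDomain_apply, Finsupp.mapDomain_single]

lemma mapRep_zero (f : H) : mapRep 0 f = f := by
  have : (fun w => List.replicate 0 (0 : Fin 2) ++ w) = id := by funext w; simp
  simp only [mapRep, Finsupp.lmapDomain_apply, this]
  exact Finsupp.mapDomain_id

lemma mapRep_succ (t : ℕ) (f : H) : mapRep (t + 1) f = mapC 0 (mapRep t f) := by
  have : (fun w => List.replicate (t+1) (0 : Fin 2) ++ w)
      = ((0 : Fin 2) :: ·) ∘ (List.replicate t (0 : Fin 2) ++ ·) := by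
    funext w; simp [List.replicate_succ]
  simp only [mapRep, mapC, Finsupp.lmapDomain_apply, this]
  exact Finsupp.mapDomain_comp

lemma cIns_nil : cIns [] = Finsupp.single [(0 : Fin 2)] 1 := by simp [cIns, shuffles]

lemma cIns_cons (b : Fin 2) (w : List (Fin 2)) :
    cIns (b :: w) = Finsupp.single ((0 : Fin 2) :: b :: w) 1 + mapC b (cIns w) := by
  have h : shuffles [(0:Fin 2)] (b::w) = [0::b::w] ++ (shuffles [0] w).map (b::·) := by
    rw [shuffles]
    congr 1
    cases w <;> simp [shuffles]
  rw [cIns, h, List.map_append, List.sum_append]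
  congr 1
  · simp
  · rw [cIns, map_list_sum (mapC b), List.map_map, List.map_map]
    refine congrArg List.sum (List.map_congr_left fun s _ => ?_)
    simp only [Function.comp_apply, mapC_single]

lemma dIns_nil : dIns [] = 0 := by simp [dIns, cIns_nil]

lemma dIns_cons (b : Fin 2) (w : List (Fin 2)) : dIns (b :: w) = mapC b (cIns w) := by
  simp [dIns, cIns_cons]

lemma cIns_eq (w : List (Fin 2)) : cIns w = Finsupp.single ((0:Fin 2) :: w) 1 + dIns w := by
  simp [dIns]

lemma dIns_rep (t : ℕ) (q : List (Fin 2)) :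
    dIns (List.replicate t 0 ++ q) =
      (t : ℚ) • Finsupp.single (List.replicate (t+1) 0 ++ q) 1 + mapRep t (dIns q) := by
  induction t with
  | zero => simp [mapRep_zero]
  | succ t ih =>
      have hw : List.replicate (t+1) (0:Fin 2) ++ q = 0 :: (List.replicate t 0 ++ q) := by
        simp [List.replicate_succ]
      rw [hw, dIns_cons, cIns_eq, map_add, ih, map_add, mapC_single, ← hw,
        map_smul, mapC_single, ← mapRep_succ]
      have hw2 : (0:Fin 2) :: (List.replicate (t+1) (0:Fin 2) ++ q)
          = List.replicate (t+1+1) (0:Fin 2) ++ q := by simp [List.replicate_succ]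
      rw [hw2]
      push_cast
      module
def Bw {r : ℕ} (n : Fin r → ℕ) : List (Fin 2) :=
  (List.ofFn fun j => (1 : Fin 2) :: List.replicate (n j) (0 : Fin 2)).flatten

def Ww (m : ℕ) {r : ℕ} (n : Fin r → ℕ) : List (Fin 2) :=
  List.replicate m 0 ++ Bw n

lemma Bw_zero (n : Fin 0 → ℕ) : Bw n = [] := by simp [Bw]

lemma Bw_succ {r : ℕ} (n : Fin (r+1) → ℕ) :
    Bw n = 1 :: (List.replicate (n 0) 0 ++ Bw fun i => n i.succ) := by
  simp [Bw, List.ofFn_succ]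

lemma tail_single_succ {r : ℕ} (n : Fin (r+1) → ℕ) (j : Fin r) :
    (fun i : Fin r => (n + Pi.single j.succ 1 : Fin (r+1) → ℕ) i.succ) = (fun i => n i.succ) + Pi.single j 1 := by
  funext i
  simp [Pi.single_apply, Fin.succ_inj]

lemma head_single_succ {r : ℕ} (n : Fin (r+1) → ℕ) (j : Fin r) :
    (n + Pi.single j.succ 1 : Fin (r+1) → ℕ) 0 = n 0 := by
  simp [Pi.single_apply, (Fin.succ_ne_zero j).symm]

lemma tail_single_zero {r : ℕ} (n : Fin (r+1) → ℕ) :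
    (fun i : Fin r => (n + Pi.single 0 1 : Fin (r+1) → ℕ) i.succ) = fun i => n i.succ := by
  funext i
  simp [Pi.single_apply, Fin.succ_ne_zero i]

lemma head_single_zero {r : ℕ} (n : Fin (r+1) → ℕ) :
    (n + Pi.single 0 1 : Fin (r+1) → ℕ) 0 = n 0 + 1 := by simp

lemma dIns_B {r : ℕ} (n : Fin r → ℕ) :
    dIns (Bw n) = ∑ j, ((n j : ℚ) + 1) • Finsupp.single (Bw (n + Pi.single j 1)) 1 := by
  induction r with
  | zero => simp [Bw_zero, dIns_nil]
  | succ r ih =>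
      rw [Bw_succ, dIns_cons, cIns_eq, dIns_rep, ih]
      rw [Fin.sum_univ_succ]
      have h0 : (0:Fin 2) :: (List.replicate (n 0) 0 ++ Bw fun i => n i.succ)
          = List.replicate (n 0 + 1) 0 ++ Bw fun i => n i.succ := by
        simp [List.replicate_succ]
      rw [h0]
      rw [map_add, map_add, map_smul, mapC_single]
      have hB0 : (1:Fin 2) :: (List.replicate (n 0 + 1) 0 ++ Bw fun i => n i.succ)
          = Bw (n + Pi.single 0 1) := by
        rw [Bw_succ (n + Pi.single 0 1), tail_single_zero, head_single_zero]
      rw [hB0]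
      have hrest : mapC 1 (mapRep (n 0)
            (∑ j, (((n j.succ : ℚ)) + 1) • Finsupp.single (Bw ((fun i => n i.succ) + Pi.single j 1)) 1))
          = ∑ j : Fin r, ((n j.succ : ℚ) + 1) • Finsupp.single (Bw (n + Pi.single j.succ 1)) 1 := by
        rw [map_sum, map_sum]
        refine Finset.sum_congr rfl fun j _ => ?_
        rw [map_smul, map_smul, mapRep_single, mapC_single]
        congr 2
        rw [Bw_succ (n + Pi.single j.succ 1), tail_single_succ, head_single_succ]
      rw [hrest]
      module
lemma Ww_cons (m : ℕ) {r : ℕ} (n : Fin r → ℕ) :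
    (0 : Fin 2) :: Ww m n = Ww (m+1) n := by
  simp [Ww, List.replicate_succ]

lemma cIns_W (m : ℕ) {r : ℕ} (n : Fin r → ℕ) :
    cIns (Ww m n) = ((m : ℚ) + 1) • Finsupp.single (Ww (m+1) n) 1 +
      ∑ j, ((n j : ℚ) + 1) • Finsupp.single (Ww m (n + Pi.single j 1)) 1 := by
  rw [cIns_eq, Ww_cons, show Ww m n = List.replicate m 0 ++ Bw n from rfl,
    dIns_rep, dIns_B, map_sum]
  rw [show (List.replicate (m+1) (0:Fin 2) ++ Bw n) = Ww (m+1) n from rfl]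
  have h2 : ∀ j : Fin r, mapRep m (((n j : ℚ) + 1) • Finsupp.single (Bw (n + Pi.single j 1)) 1)
      = ((n j : ℚ) + 1) • Finsupp.single (Ww m (n + Pi.single j 1)) 1 := by
    intro j
    rw [map_smul, mapRep_single]
    rfl
  rw [Finset.sum_congr rfl fun j _ => h2 j]
  module

noncomputable def rho (m : ℕ) {r : ℕ} (n : Fin r → ℕ) : H :=
  ∑ l ∈ Finset.Nat.antidiagonalTuple r m,
    (∏ j, ((n j + l j).choose (l j) : ℚ)) • Finsupp.single (Bw (n + l)) (1 : ℚ)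

noncomputable def shx : H →ₗ[ℚ] H :=
  Finsupp.lsum ℚ fun w => LinearMap.toSpanSingleton ℚ H (cIns w)

lemma shx_single (w : List (Fin 2)) : shx (Finsupp.single w 1) = cIns w := by
  simp [shx, Finsupp.sum_single_index, LinearMap.toSpanSingleton_apply]

lemma sh_eq (g : H) : sh (Finsupp.single [(0:Fin 2)] 1) g = shx g := by
  rw [sh, Finsupp.sum_single_index]
  · rw [shx, Finsupp.lsum_apply]
    refine Finsupp.sum_congr fun w' _ => ?_
    rw [LinearMap.toSpanSingleton_apply, one_mul]
    rfl
  · simp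
lemma choose_keyN (a b : ℕ) :
    (b + 1) * Nat.choose (a + b + 1) (b + 1) = (a + 1) * Nat.choose (a + b + 1) b := by
  have h := Nat.choose_succ_right_eq (a + b + 1) b
  have h2 : a + b + 1 - b = a + 1 := by omega
  rw [h2] at h
  simpa [Nat.mul_comm] using h

lemma sum_reindex (m : ℕ) {r : ℕ} (n : Fin r → ℕ) (j : Fin r) :
    ∑ l ∈ Finset.Nat.antidiagonalTuple r (m+1),
        ((l j : ℚ) * ∏ i, ((n i + l i).choose (l i) : ℚ)) • Finsupp.single (Bw (n + l)) (1:ℚ)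
      = ((n j : ℚ) + 1) • rho m (n + Pi.single j 1) := by
  rw [rho, Finset.smul_sum]
  have hfil : ∑ l ∈ (Finset.Nat.antidiagonalTuple r (m+1)).filter (fun l => l j ≠ 0),
      ((l j : ℚ) * ∏ i, ((n i + l i).choose (l i) : ℚ)) • Finsupp.single (Bw (n + l)) (1:ℚ)
      = ∑ l ∈ Finset.Nat.antidiagonalTuple r (m+1),
      ((l j : ℚ) * ∏ i, ((n i + l i).choose (l i) : ℚ)) • Finsupp.single (Bw (n + l)) (1:ℚ) := by
    refine Finset.sum_filter_of_ne fun l _ hF => ?_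
    intro hlj
    apply hF
    rw [hlj]
    simp
  rw [← hfil]
  refine Finset.sum_nbij' (fun l => l - Pi.single j 1) (fun l' => l' + Pi.single j 1)
    ?_ ?_ ?_ ?_ ?_
  · -- forward membership
    intro l hl
    rw [Finset.mem_filter, Finset.Nat.mem_antidiagonalTuple] at hl
    obtain ⟨hl1, hl2⟩ := hl
    rw [Finset.Nat.mem_antidiagonalTuple]
    have e1 : ∀ (f : Fin r → ℕ), ∑ i, f i = f j + ∑ i ∈ Finset.univ.erase j, f i :=
      fun f => (Finset.add_sum_erase _ f (Finset.mem_univ j)).symm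
    show ∑ i, (l - Pi.single j 1 : Fin r → ℕ) i = m
    rw [e1] at hl1 ⊢
    have e2 : ∑ i ∈ Finset.univ.erase j, (l - Pi.single j 1 : Fin r → ℕ) i
        = ∑ i ∈ Finset.univ.erase j, l i := by
      refine Finset.sum_congr rfl fun i hi => ?_
      have hij : i ≠ j := Finset.ne_of_mem_erase hi
      simp [Pi.single_apply, hij]
    rw [e2]
    have e3 : (l - Pi.single j 1 : Fin r → ℕ) j = l j - 1 := by simp
    rw [e3]
    omega
  · -- backward membership
    intro l' hl'
    rw [Finset.Nat.mem_antidiagonalTuple] at hl'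
    rw [Finset.mem_filter, Finset.Nat.mem_antidiagonalTuple]
    constructor
    · show ∑ i, (l' + Pi.single j 1 : Fin r → ℕ) i = m + 1
      simp only [Pi.add_apply]
      rw [Finset.sum_add_distrib, hl', Finset.sum_pi_single']
      simp
    · show (l' + Pi.single j 1 : Fin r → ℕ) j ≠ 0
      simp
  · -- left inverse
    intro l hl
    rw [Finset.mem_filter] at hl
    show (l - Pi.single j 1 + Pi.single j 1 : Fin r → ℕ) = l
    funext i
    rcases eq_or_ne i j with rfl | hij
    · have : l i ≠ 0 := hl.2
      simp only [Pi.add_apply, Pi.sub_apply, Pi.single_eq_same]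
      omega
    · simp [Pi.single_apply, hij]
  · -- right inverse
    intro l' _
    show (l' + Pi.single j 1 - Pi.single j 1 : Fin r → ℕ) = l'
    funext i
    rcases eq_or_ne i j with rfl | hij
    · simp
    · simp [Pi.single_apply, hij]
  · -- values
    intro l hl
    rw [Finset.mem_filter] at hl
    have hlj : l j ≠ 0 := hl.2
    obtain ⟨l', rfl⟩ : ∃ l' : Fin r → ℕ, l = l' + Pi.single j 1 := by
      refine ⟨l - Pi.single j 1, ?_⟩
      funext i
      rcases eq_or_ne i j with rfl | hij
      · simp only [Pi.add_apply, Pi.sub_apply, Pi.single_eq_same]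
        omega
      · simp [Pi.single_apply, hij]
    have hsub : (l' + Pi.single j 1 - Pi.single j 1 : Fin r → ℕ) = l' := by
      funext i
      rcases eq_or_ne i j with rfl | hij
      · simp
      · simp [Pi.single_apply, hij]
    beta_reduce
    rw [hsub, smul_smul]
    have hword : n + (l' + Pi.single j 1) = n + Pi.single j 1 + l' := by
      funext i
      simp only [Pi.add_apply]
      omega
    rw [hword]
    congr 1
    have hsplit : ∀ (f : Fin r → ℚ), ∏ i, f i = f j * ∏ i ∈ Finset.univ.erase j, f i :=
      fun f => (Finset.mul_prod_erase _ f (Finset.mem_univ j)).symm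
    rw [hsplit, hsplit]
    have herase : ∏ i ∈ Finset.univ.erase j,
        ((n i + (l' + Pi.single j 1 : Fin r → ℕ) i).choose ((l' + Pi.single j 1 : Fin r → ℕ) i) : ℚ)
        = ∏ i ∈ Finset.univ.erase j,
            (((n + Pi.single j 1 : Fin r → ℕ) i + l' i).choose (l' i) : ℚ) := by
      refine Finset.prod_congr rfl fun i hi => ?_
      have hij : i ≠ j := Finset.ne_of_mem_erase hi
      have h1 : (l' + Pi.single j 1 : Fin r → ℕ) i = l' i := by simp [Pi.single_apply, hij]
      have h2 : (n + Pi.single j 1 : Fin r → ℕ) i = n i := by simp [Pi.single_apply, hij]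
      rw [h1, h2]
    rw [herase]
    have hv1 : (l' + Pi.single j 1 : Fin r → ℕ) j = l' j + 1 := by simp
    have hv2 : (n + Pi.single j 1 : Fin r → ℕ) j = n j + 1 := by simp
    rw [hv1, hv2, show n j + (l' j + 1) = n j + l' j + 1 from by omega,
      show n j + 1 + l' j = n j + l' j + 1 from by omega]
    have hkey := choose_keyN (n j) (l' j)
    have hcast : ((l' j : ℚ) + 1) * ((n j + l' j + 1).choose (l' j + 1) : ℚ)
        = ((n j : ℚ) + 1) * ((n j + l' j + 1).choose (l' j) : ℚ) := by
      exact_mod_cast congrArg (fun x : ℕ => (x : ℚ)) hkey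
    push_cast
    linear_combination (∏ i ∈ Finset.univ.erase j,
        (((n + Pi.single j 1 : Fin r → ℕ) i + l' i).choose (l' i) : ℚ)) * hcast

lemma comb (m : ℕ) {r : ℕ} (n : Fin r → ℕ) :
    ((m:ℚ) + 1) • rho (m+1) n = ∑ j, ((n j : ℚ) + 1) • rho m (n + Pi.single j 1) := by
  rw [rho, Finset.smul_sum]
  have step : ∀ l ∈ Finset.Nat.antidiagonalTuple r (m+1),
      ((m:ℚ)+1) • ((∏ i, ((n i + l i).choose (l i) : ℚ)) • Finsupp.single (Bw (n + l)) (1:ℚ))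
      = ∑ j, ((l j : ℚ) * ∏ i, ((n i + l i).choose (l i) : ℚ)) • Finsupp.single (Bw (n + l)) (1:ℚ) := by
    intro l hl
    rw [Finset.Nat.mem_antidiagonalTuple] at hl
    rw [smul_smul, ← Finset.sum_smul]
    congr 1
    rw [← Finset.sum_mul]
    congr 1
    have : ((m:ℚ) + 1) = ((m + 1 : ℕ) : ℚ) := by push_cast; ring
    rw [this, ← hl]
    push_cast
    rfl
  rw [Finset.sum_congr rfl step, Finset.sum_comm]
  exact Finset.sum_congr rfl fun j _ => sum_reindex m n j
lemma mainlem (m : ℕ) {r : ℕ} (n : Fin r → ℕ) :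
    Finsupp.single (Ww m n) 1 - ((-1:ℚ))^m • rho m n ∈ LinearMap.range shx := by
  induction m generalizing n with
  | zero =>
      have h1 : rho 0 n = Finsupp.single (Bw n) 1 := by
        rw [rho, Finset.Nat.antidiagonalTuple_zero_right, Finset.sum_singleton]
        simp
      have h2 : Ww 0 n = Bw n := by simp [Ww]
      rw [h1, h2, pow_zero, one_smul, sub_self]
      exact zero_mem _
  | succ m ih =>
      have hc : cIns (Ww m n) ∈ LinearMap.range shx :=
        ⟨Finsupp.single (Ww m n) 1, shx_single _⟩
      have hsum : ∑ j, ((n j : ℚ) + 1) •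
          (Finsupp.single (Ww m (n + Pi.single j 1)) (1:ℚ)
            - (-1:ℚ)^m • rho m (n + Pi.single j 1)) ∈ LinearMap.range shx :=
        Submodule.sum_smul_mem _ _ fun j _ => ih (n + Pi.single j 1)
      have hE : cIns (Ww m n) - ∑ j, ((n j : ℚ) + 1) •
          (Finsupp.single (Ww m (n + Pi.single j 1)) (1:ℚ)
            - (-1:ℚ)^m • rho m (n + Pi.single j 1)) ∈ LinearMap.range shx :=
        sub_mem hc hsum
      have key : Finsupp.single (Ww (m+1) n) (1:ℚ) - (-1:ℚ)^(m+1) • rho (m+1) n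
          = ((m:ℚ)+1)⁻¹ • (cIns (Ww m n) - ∑ j, ((n j : ℚ) + 1) •
              (Finsupp.single (Ww m (n + Pi.single j 1)) (1:ℚ)
                - (-1:ℚ)^m • rho m (n + Pi.single j 1))) := by
        have hm : ((m:ℚ)+1) ≠ 0 := by positivity
        rw [cIns_W m n]
        simp only [smul_sub]
        rw [Finset.sum_sub_distrib]
        have h2 : ∑ j, ((n j : ℚ)+1) • ((-1:ℚ)^m • rho m (n + Pi.single j 1))
            = (-1:ℚ)^m • (((m:ℚ)+1) • rho (m+1) n) := by
          rw [comb m n, Finset.smul_sum]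
          exact Finset.sum_congr rfl fun j _ => (smul_comm _ _ _).symm
        rw [h2]
        have hpow : (-1:ℚ)^(m+1) = -(-1:ℚ)^m := by ring
        rw [hpow]
        match_scalars <;> field_simp <;> ring
      rw [key]
      exact Submodule.smul_mem _ _ hE

theorem stmt5 (m r : ℕ) (k : Fin r → ℕ) (hk : ∀ j, 0 < k j) :
    ∃ w : H,
      sh (Finsupp.single [(0 : Fin 2)] 1) w =
        Finsupp.single
            (List.replicate m (0 : Fin 2) ++
              (List.ofFn fun j => (1 : Fin 2) :: List.replicate (k j - 1) (0 : Fin 2)).flatten)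
            (1 : ℚ) -
          (-1 : ℚ) ^ m •
            ∑ l ∈ Finset.Nat.antidiagonalTuple r m,
              (∏ j : Fin r, ((k j + l j - 1).choose (l j) : ℚ)) •
                Finsupp.single
                  ((List.ofFn fun j =>
                      (1 : Fin 2) :: List.replicate (k j + l j - 1) (0 : Fin 2)).flatten)
                  (1 : ℚ) := by
  obtain ⟨w, hw⟩ := mainlem m (fun j => k j - 1)
  refine ⟨w, ?_⟩
  rw [sh_eq, hw]
  have h1 : ∀ (j : Fin r) (t : ℕ), k j + t - 1 = k j - 1 + t := by
    intro j t
    have := hk j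
    omega
  simp only [h1]
  rw [rho]
  simp only [Ww, Bw, Pi.add_apply]
end

section
/- For every nonnegative integer n, in H one has Σ_{i=0}^{n} (−1)^i (x(yx)^i) ш ((yx)^{n−i}) = (−1)^{n/2} 2^n x(y²x²)^{n/2} if n is even, and = (−1)^{(n−1)/2} 2^n y(x²y²)^{(n−1)/2}x² if n is odd. -/
open scoped BigOperators

namespace Aux

noncomputable def sg (w : List (Fin 2)) : H := Finsupp.single w 1

noncomputable def L (u : Fin 2) : H →ₗ[ℚ] H := Finsupp.lmapDomain ℚ ℚ (List.cons u)

lemma L_sg (u : Fin 2) (w : List (Fin 2)) : L u (sg w) = sg (u :: w) := by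
  simp [L, sg, Finsupp.lmapDomain_apply, Finsupp.mapDomain_single]

lemma shuffles_nil_left (w : List (Fin 2)) : shuffles ([] : List (Fin 2)) w = [w] := by
  simp [shuffles]

lemma shuffles_nil_right (w : List (Fin 2)) : shuffles w ([] : List (Fin 2)) = [w] := by
  cases w <;> simp [shuffles]

lemma shuffles_cons (u u' : Fin 2) (w w' : List (Fin 2)) :
    shuffles (u :: w) (u' :: w') =
      ((shuffles w (u' :: w')).map (u :: ·)) ++ ((shuffles (u :: w) w').map (u' :: ·)) := by
  rw [shuffles]

lemma sh_sg (w w' : List (Fin 2)) :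
    sh (sg w) (sg w') = ((shuffles w w').map sg).sum := by
  rw [sh, sg, Finsupp.sum_single_index, sg, Finsupp.sum_single_index]
  · rw [one_mul, one_smul]; rfl
  · simp
  · simp


lemma shuffles_sum_comm {M : Type*} [AddCommMonoid M] (f : List (Fin 2) → M) :
    ∀ w w' : List (Fin 2), ((shuffles w w').map f).sum = ((shuffles w' w).map f).sum
  | [], w' => by rw [shuffles_nil_left, shuffles_nil_right]
  | w, [] => by rw [shuffles_nil_left, shuffles_nil_right]
  | a :: w, b :: w' => by
    rw [shuffles_cons, shuffles_cons, List.map_append, List.map_append, List.sum_append,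
      List.sum_append, List.map_map, List.map_map, List.map_map, List.map_map,
      shuffles_sum_comm _ w (b :: w'), shuffles_sum_comm _ (a :: w) w', add_comm]
termination_by w w' => w.length + w'.length

lemma sh_sg_comm (w w' : List (Fin 2)) : sh (sg w) (sg w') = sh (sg w') (sg w) := by
  rw [sh_sg, sh_sg, shuffles_sum_comm]

lemma sh_sg_nil_right (w : List (Fin 2)) : sh (sg w) (sg []) = sg w := by
  rw [sh_sg, shuffles_nil_right]; simp

lemma sh_sg_nil_left (w : List (Fin 2)) : sh (sg []) (sg w) = sg w := by
  rw [sh_sg, shuffles_nil_left]; simp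

lemma sh_rec (u u' : Fin 2) (w w' : List (Fin 2)) :
    sh (sg (u :: w)) (sg (u' :: w')) =
      L u (sh (sg w) (sg (u' :: w'))) + L u' (sh (sg (u :: w)) (sg w')) := by
  rw [sh_sg, sh_sg, sh_sg, shuffles_cons, List.map_append, List.sum_append,
    List.map_map, List.map_map]
  have h : ∀ (v : Fin 2) (l : List (List (Fin 2))),
      (l.map (sg ∘ (v :: ·))).sum = L v ((l.map sg).sum) := by
    intro v l
    rw [map_list_sum, List.map_map]
    congr 1
    ext s
    simp [Function.comp, L_sg]
  rw [h, h]

noncomputable def aw (i : ℕ) : List (Fin 2) := 0 :: alt2 1 0 i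
noncomputable def bw (j : ℕ) : List (Fin 2) := alt2 1 0 j

noncomputable def Sn (n : ℕ) : H :=
  ∑ i ∈ Finset.range (n+1), (-1:ℚ)^i • sh (sg (aw i)) (sg (bw (n-i)))
noncomputable def Pn (m : ℕ) : H :=
  ∑ i ∈ Finset.range (m+1), (-1:ℚ)^i • sh (sg (aw i)) (sg (aw (m-i)))
noncomputable def Qn (m : ℕ) : H :=
  ∑ i ∈ Finset.range (m+1), (-1:ℚ)^i • sh (sg (bw i)) (sg (bw (m-i)))

lemma negpow_sq (m : ℕ) : ((-1:ℚ))^m * (-1)^m = 1 := by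
  rw [← pow_add]; exact Even.neg_one_pow ⟨m, rfl⟩

lemma negpow_sub {m j : ℕ} (h : j ≤ m) : ((-1:ℚ))^(m-j) = (-1)^m * (-1)^j := by
  have h2 : ((-1:ℚ))^(m-j) * ((-1:ℚ)^j * (-1)^j) = (-1)^m * (-1)^j := by
    rw [← mul_assoc, ← pow_add, Nat.sub_add_cancel h]
  rwa [negpow_sq, mul_one] at h2

lemma sum_smul_L (v : Fin 2) (s : Finset ℕ) (c : ℕ → ℚ) (g : ℕ → H) :
    ∑ i ∈ s, c i • L v (g i) = L v (∑ i ∈ s, c i • g i) := by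
  rw [map_sum]
  exact Finset.sum_congr rfl fun i _ => (map_smul (L v) (c i) (g i)).symm

lemma Pn_eq (m : ℕ) : Pn m = (1 + (-1:ℚ)^m) • L 0 (Sn m) := by
  have key : ∀ i ∈ Finset.range (m+1),
      (-1:ℚ)^i • sh (sg (aw i)) (sg (aw (m-i))) =
        (-1:ℚ)^i • L 0 (sh (sg (aw (m-i))) (sg (bw i))) +
        (-1:ℚ)^i • L 0 (sh (sg (aw i)) (sg (bw (m-i)))) := by
    intro i _
    rw [show aw i = 0 :: bw i from rfl, show aw (m-i) = 0 :: bw (m-i) from rfl,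
      sh_rec, smul_add, ← show aw (m-i) = 0 :: bw (m-i) from rfl,
      ← show aw i = 0 :: bw i from rfl, sh_sg_comm (bw i) (aw (m-i))]
  rw [Pn, Finset.sum_congr rfl key, Finset.sum_add_distrib]
  have hA : ∑ i ∈ Finset.range (m+1), (-1:ℚ)^i • L 0 (sh (sg (aw (m-i))) (sg (bw i))) =
      (-1:ℚ)^m • L 0 (Sn m) := by
    have hrefl : ∑ i ∈ Finset.range (m+1), (-1:ℚ)^i • L 0 (sh (sg (aw (m-i))) (sg (bw i))) =
        ∑ j ∈ Finset.range (m+1), (-1:ℚ)^(m-j) • L 0 (sh (sg (aw j)) (sg (bw (m-j)))) := by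
      rw [← Finset.sum_range_reflect]
      refine Finset.sum_congr rfl fun i hi => ?_
      simp only [Finset.mem_range] at hi
      have h1 : m + 1 - 1 - i = m - i := by omega
      have h2 : m - (m - i) = i := by omega
      rw [h1, h2]
    rw [hrefl]
    have : ∀ j ∈ Finset.range (m+1),
        (-1:ℚ)^(m-j) • L 0 (sh (sg (aw j)) (sg (bw (m-j)))) =
        (-1:ℚ)^m • ((-1:ℚ)^j • L 0 (sh (sg (aw j)) (sg (bw (m-j))))) := by
      intro j hj
      simp only [Finset.mem_range] at hj
      rw [negpow_sub (by omega), mul_smul]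
    rw [Finset.sum_congr rfl this, ← Finset.smul_sum, sum_smul_L, Sn]
  rw [hA, sum_smul_L, ← Sn, add_smul, one_smul, add_comm]

lemma Qn_succ (m : ℕ) : Qn (m+1) = ((-1:ℚ)^m - 1) • L 1 (Sn m) := by
  have key : ∀ i ∈ Finset.range m,
      (-1:ℚ)^(i+1) • sh (sg (bw (i+1))) (sg (bw (m+1-(i+1)))) =
        (-1:ℚ)^(i+1) • L 1 (sh (sg (aw i)) (sg (bw (m-i)))) +
        (-1:ℚ)^(i+1) • L 1 (sh (sg (aw (m-1-i))) (sg (bw (i+1)))) := by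
    intro i hi
    simp only [Finset.mem_range] at hi
    have h1 : m + 1 - (i+1) = m - i := by omega
    have h2 : bw (m - i) = 1 :: aw (m - 1 - i) := by
      have h : m - i = (m - 1 - i) + 1 := by omega
      rw [h]; rfl
    have h3 : bw (i+1) = 1 :: aw i := rfl
    rw [h1, h2, h3, sh_rec, ← h2, ← h3, sh_sg_comm (bw (i+1)) (aw (m-1-i)), smul_add]
  rw [Qn, Finset.sum_range_succ', Finset.sum_range_succ, Finset.sum_congr rfl key,
    Finset.sum_add_distrib]
  have hmid : ∑ i ∈ Finset.range m, (-1:ℚ)^i • sh (sg (aw i)) (sg (bw (m-i))) =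
      Sn m - (-1:ℚ)^m • sg (aw m) := by
    have := Finset.sum_range_succ (fun i => (-1:ℚ)^i • sh (sg (aw i)) (sg (bw (m-i)))) m
    rw [← Sn, Nat.sub_self, show bw 0 = ([] : List (Fin 2)) from rfl, sh_sg_nil_right] at this
    rw [eq_sub_iff_add_eq, ← this]
  have hA : ∑ i ∈ Finset.range m, (-1:ℚ)^(i+1) • L 1 (sh (sg (aw i)) (sg (bw (m-i)))) =
      -(L 1 (Sn m)) + (-1:ℚ)^m • L 1 (sg (aw m)) := by
    have : ∀ i ∈ Finset.range m,
        (-1:ℚ)^(i+1) • L 1 (sh (sg (aw i)) (sg (bw (m-i)))) =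
        (-1:ℚ) • ((-1:ℚ)^i • L 1 (sh (sg (aw i)) (sg (bw (m-i))))) := by
      intro i _; rw [pow_succ, mul_comm, mul_smul]
    rw [Finset.sum_congr rfl this, ← Finset.smul_sum, sum_smul_L, hmid, map_sub, map_smul]
    rw [neg_one_smul, neg_sub, sub_eq_neg_add]
  have hB : ∑ i ∈ Finset.range m, (-1:ℚ)^(i+1) • L 1 (sh (sg (aw (m-1-i))) (sg (bw (i+1)))) =
      (-1:ℚ)^m • L 1 (Sn m) - L 1 (sg (aw m)) := by
    have hrefl : ∑ i ∈ Finset.range m, (-1:ℚ)^(i+1) • L 1 (sh (sg (aw (m-1-i))) (sg (bw (i+1)))) =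
        ∑ j ∈ Finset.range m, (-1:ℚ)^(m-j) • L 1 (sh (sg (aw j)) (sg (bw (m-j)))) := by
      rw [← Finset.sum_range_reflect
        (fun j => (-1:ℚ)^(m-j) • L 1 (sh (sg (aw j)) (sg (bw (m-j)))))]
      refine Finset.sum_congr rfl fun i hi => ?_
      simp only [Finset.mem_range] at hi
      have h1 : m - (m - 1 - i) = i + 1 := by omega
      rw [h1]
    rw [hrefl]
    have : ∀ j ∈ Finset.range m,
        (-1:ℚ)^(m-j) • L 1 (sh (sg (aw j)) (sg (bw (m-j)))) =
        (-1:ℚ)^m • ((-1:ℚ)^j • L 1 (sh (sg (aw j)) (sg (bw (m-j))))) := by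
      intro j hj
      simp only [Finset.mem_range] at hj
      rw [negpow_sub (by omega), mul_smul]
    rw [Finset.sum_congr rfl this, ← Finset.smul_sum, sum_smul_L, hmid, map_sub, map_smul,
      smul_sub, smul_smul, negpow_sq, one_smul]
  have hb1 : sh (sg (bw (m+1))) (sg (bw (m+1-(m+1)))) = L 1 (sg (aw m)) := by
    rw [Nat.sub_self, show bw 0 = ([] : List (Fin 2)) from rfl, sh_sg_nil_right,
      show bw (m+1) = 1 :: aw m from rfl, L_sg]
  have hb2 : sh (sg (bw 0)) (sg (bw (m+1-0))) = L 1 (sg (aw m)) := by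
    rw [show bw 0 = ([] : List (Fin 2)) from rfl, sh_sg_nil_left,
      show bw (m+1-0) = 1 :: aw m from rfl, L_sg]
  rw [hA, hB, hb1, hb2, pow_zero, pow_succ]
  module

lemma Sn_succ (m : ℕ) : Sn (m+1) = L 0 (Qn (m+1)) + L 1 (Pn m) := by
  have key : ∀ i ∈ Finset.range (m+1),
      (-1:ℚ)^i • sh (sg (aw i)) (sg (bw (m+1-i))) =
        (-1:ℚ)^i • L 0 (sh (sg (bw i)) (sg (bw (m+1-i)))) +
        (-1:ℚ)^i • L 1 (sh (sg (aw i)) (sg (aw (m-i)))) := by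
    intro i hi
    simp only [Finset.mem_range] at hi
    have h2 : bw (m+1-i) = 1 :: aw (m-i) := by
      have h : m + 1 - i = (m - i) + 1 := by omega
      rw [h]; rfl
    have h3 : aw i = 0 :: bw i := rfl
    rw [h2, h3, sh_rec, ← h2, ← h3, smul_add]
  rw [Sn, Finset.sum_range_succ, Finset.sum_congr rfl key, Finset.sum_add_distrib]
  have hmid : ∑ i ∈ Finset.range (m+1), (-1:ℚ)^i • sh (sg (bw i)) (sg (bw (m+1-i))) =
      Qn (m+1) - (-1:ℚ)^(m+1) • sg (bw (m+1)) := by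
    have := Finset.sum_range_succ (fun i => (-1:ℚ)^i • sh (sg (bw i)) (sg (bw (m+1-i)))) (m+1)
    rw [← Qn, Nat.sub_self, show bw 0 = ([] : List (Fin 2)) from rfl, sh_sg_nil_right] at this
    rw [eq_sub_iff_add_eq, ← this]
  have hlast : sh (sg (aw (m+1))) (sg (bw (m+1-(m+1)))) = sg (aw (m+1)) := by
    rw [Nat.sub_self, show bw 0 = ([] : List (Fin 2)) from rfl, sh_sg_nil_right]
  rw [sum_smul_L, sum_smul_L, hmid, ← Pn, hlast, map_sub, map_smul,
    show L 0 (sg (bw (m+1))) = sg (aw (m+1)) from L_sg 0 (bw (m+1))]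
  module

lemma Sn_zero : Sn 0 = sg (aw 0) := by
  rw [Sn, Finset.sum_range_one, pow_zero, one_smul,
    show bw 0 = ([] : List (Fin 2)) from rfl, sh_sg_nil_right]

lemma alt4_app {α : Type*} (a b : α) : ∀ k, alt4 a a b b k ++ [a, a] = a :: a :: alt4 b b a a k
  | 0 => rfl
  | k + 1 => by
    show a :: a :: b :: b :: (alt4 a a b b k ++ [a, a]) = _
    rw [alt4_app a b k]
    rfl

lemma Sn_closed (n : ℕ) : Sn n =
    if Even n then ((-1:ℚ)^(n/2) * 2^n) • sg (0 :: alt4 1 1 0 0 (n/2))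
    else ((-1:ℚ)^((n-1)/2) * 2^n) • sg (1 :: (alt4 0 0 1 1 ((n-1)/2) ++ [0, 0])) := by
  induction n with
  | zero =>
    rw [if_pos (Even.zero), Sn_zero]
    norm_num
    rfl
  | succ n ih =>
    rw [Sn_succ, Qn_succ, Pn_eq, ih]
    rcases Nat.even_or_odd n with he | ho
    · obtain ⟨k, hk⟩ := he
      have hn : n = 2 * k := by omega
      subst hn
      rw [if_pos (by exact ⟨k, by omega⟩), if_neg (by simp [Nat.even_add_one, parity_simps])]
      have e1 : ((-1:ℚ))^(2*k) = 1 := by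
        rw [pow_mul]; norm_num
      rw [e1]
      norm_num
      rw [L_sg, L_sg, show alt4 (0:Fin 2) 0 1 1 k ++ [0, 0] = 0 :: 0 :: alt4 1 1 0 0 k
        from alt4_app 0 1 k]
      match_scalars
      ring
    · obtain ⟨k, hk⟩ := ho
      subst hk
      rw [if_neg (by simp [Nat.even_add_one, parity_simps]), if_pos (by exact ⟨k+1, by omega⟩)]
      have e1 : ((-1:ℚ))^(2*k+1) = -1 := by
        rw [pow_succ, pow_mul]; norm_num
      rw [e1]
      norm_num
      rw [show (2*k+1+1)/2 = k + 1 by omega, L_sg, L_sg,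
        show alt4 (0:Fin 2) 0 1 1 k ++ [0, 0] = 0 :: 0 :: alt4 1 1 0 0 k from alt4_app 0 1 k,
        show alt4 (1:Fin 2) 1 0 0 (k+1) = 1 :: 1 :: 0 :: 0 :: alt4 1 1 0 0 k from rfl]
      match_scalars
      ring
end Aux

theorem stmt6 (n : ℕ) :
    ∑ i ∈ Finset.range (n + 1),
        (-1 : ℚ) ^ i •
          sh (Finsupp.single ((0 : Fin 2) :: alt2 (1 : Fin 2) 0 i) 1)
            (Finsupp.single (alt2 (1 : Fin 2) 0 (n - i)) 1) =
      if Even n then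
        ((-1 : ℚ) ^ (n / 2) * 2 ^ n) •
          Finsupp.single ((0 : Fin 2) :: alt4 (1 : Fin 2) 1 0 0 (n / 2)) (1 : ℚ)
      else
        ((-1 : ℚ) ^ ((n - 1) / 2) * 2 ^ n) •
          Finsupp.single ((1 : Fin 2) :: (alt4 (0 : Fin 2) 0 1 1 ((n - 1) / 2) ++ [0, 0]))
            (1 : ℚ) := by
  exact Aux.Sn_closed n
end

section
/- For every nonnegative integer n, in H one has Σ_{i=0}^{n} (−1)^i (x(yx)^i) ш (x(yx)^{n−i}) = (−1)^{n/2} 2^{n+1} x²(y²x²)^{n/2} if n is even, and = 0 if n is odd. -/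
open scoped BigOperators

noncomputable def δ (w : List (Fin 2)) : H := Finsupp.single w 1

noncomputable def C (a : Fin 2) : H →ₗ[ℚ] H := Finsupp.lmapDomain ℚ ℚ (a :: ·)

lemma C_δ (a : Fin 2) (w : List (Fin 2)) : C a (δ w) = δ (a :: w) := by
  simp [C, δ, Finsupp.lmapDomain, Finsupp.mapDomain_single]

lemma shuffles_nil_left {α : Type*} (w : List α) : shuffles ([] : List α) w = [w] := by
  cases w <;> simp [shuffles]

lemma shuffles_nil_right {α : Type*} (w : List α) : shuffles w ([] : List α) = [w] := by
  cases w <;> simp [shuffles]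

lemma shuffles_cons_cons {α : Type*} (a b : α) (w w' : List α) :
    shuffles (a :: w) (b :: w') =
      ((shuffles w (b :: w')).map (a :: ·)) ++ ((shuffles (a :: w) w').map (b :: ·)) := by
  simp [shuffles]

lemma sh_δδ (w w' : List (Fin 2)) :
    sh (δ w) (δ w') = ((shuffles w w').map δ).sum := by
  unfold sh δ
  rw [Finsupp.sum_single_index, Finsupp.sum_single_index] <;> simp

lemma C_mapsum (a : Fin 2) (l : List (List (Fin 2))) :
    C a ((l.map δ).sum) = ((l.map (a :: ·)).map δ).sum := by
  rw [map_list_sum, List.map_map, List.map_map]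
  exact congrArg List.sum (List.map_congr_left (fun w _ => C_δ a w))

lemma sh_cc (a b : Fin 2) (w w' : List (Fin 2)) :
    sh (δ (a :: w)) (δ (b :: w')) =
      C a (sh (δ w) (δ (b :: w'))) + C b (sh (δ (a :: w)) (δ w')) := by
  rw [sh_δδ, sh_δδ, sh_δδ, shuffles_cons_cons, List.map_append, List.sum_append,
    C_mapsum, C_mapsum]

lemma sh_nil_left (w : List (Fin 2)) : sh (δ []) (δ w) = δ w := by
  rw [sh_δδ, shuffles_nil_left]; simp

lemma sh_nil_right (w : List (Fin 2)) : sh (δ w) (δ []) = δ w := by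
  rw [sh_δδ, shuffles_nil_right]; simp

lemma sh_comm_δ : ∀ (w w' : List (Fin 2)), sh (δ w) (δ w') = sh (δ w') (δ w)
  | [], w' => by rw [sh_nil_left, sh_nil_right]
  | a :: w, [] => by rw [sh_nil_left, sh_nil_right]
  | a :: w, b :: w' => by
      rw [sh_cc, sh_cc, sh_comm_δ w (b :: w'), sh_comm_δ (a :: w) w', add_comm]
termination_by w w' => w.length + w'.length

/-- `(yx)^i` -/
def Qw (i : ℕ) : List (Fin 2) := alt2 1 0 i
/-- `x(yx)^i` -/
def Pw (i : ℕ) : List (Fin 2) := (0 : Fin 2) :: Qw i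

lemma Qw_succ (i : ℕ) : Qw (i + 1) = (1 : Fin 2) :: Pw i := rfl

noncomputable def Sn (n : ℕ) : H :=
  ∑ i ∈ Finset.range (n + 1), (-1 : ℚ) ^ i • sh (δ (Pw i)) (δ (Pw (n - i)))
noncomputable def Tn (n : ℕ) : H :=
  ∑ i ∈ Finset.range (n + 1), (-1 : ℚ) ^ i • sh (δ (Qw i)) (δ (Qw (n - i)))
noncomputable def Un (n : ℕ) : H :=
  ∑ i ∈ Finset.range (n + 1), (-1 : ℚ) ^ i • sh (δ (Qw i)) (δ (Pw (n - i)))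
noncomputable def Vn (n : ℕ) : H :=
  ∑ i ∈ Finset.range (n + 1), (-1 : ℚ) ^ i • sh (δ (Pw i)) (δ (Qw (n - i)))

lemma V_eq (n : ℕ) : Vn n = (-1 : ℚ) ^ n • Un n := by
  rw [Un, Finset.smul_sum, ← Finset.sum_range_reflect]
  rw [Vn]
  refine Finset.sum_congr rfl fun i hi => ?_
  rw [Finset.mem_range] at hi
  have hle : i ≤ n := Nat.lt_succ_iff.mp hi
  have h1 : n + 1 - 1 - i = n - i := by omega
  have h2 : n - (n - i) = i := by omega
  have h3 : n + (n - i) = i + 2 * (n - i) := by omega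
  rw [h1, h2, smul_smul, ← pow_add, sh_comm_δ, h3, pow_add, pow_mul, neg_one_sq,
    one_pow, mul_one]

lemma S_eq (n : ℕ) : Sn n = C 0 ((1 + (-1 : ℚ) ^ n) • Un n) := by
  have : Sn n = C 0 (Un n + Vn n) := by
    rw [Un, Vn, ← Finset.sum_add_distrib, map_sum, Sn]
    refine Finset.sum_congr rfl fun i _ => ?_
    have h := sh_cc 0 0 (Qw i) (Qw (n - i))
    rw [show ((0 : Fin 2) :: Qw i) = Pw i from rfl,
      show ((0 : Fin 2) :: Qw (n - i)) = Pw (n - i) from rfl] at h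
    rw [h, ← map_add, ← smul_add, map_smul]
  rw [this, V_eq, add_smul, one_smul]

lemma S_odd {n : ℕ} (hn : Odd n) : Sn n = 0 := by
  rw [S_eq, hn.neg_one_pow]
  norm_num

lemma U_succ (m : ℕ) :
    Un (m + 1) = C 1 (-(Sn m)) + C 0 (Tn (m + 1)) := by
  have key : ∀ i ∈ Finset.range (m + 2),
      (-1 : ℚ) ^ i • sh (δ (Qw i)) (δ (Pw (m + 1 - i))) =
        (if i = 0 then 0 else (-1 : ℚ) ^ i • C 1 (sh (δ (Pw (i - 1))) (δ (Pw (m + 1 - i)))))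
          + (-1 : ℚ) ^ i • C 0 (sh (δ (Qw i)) (δ (Qw (m + 1 - i)))) := by
    intro i _
    match i with
    | 0 =>
      rw [if_pos rfl, zero_add]
      simp only [pow_zero, one_smul, Nat.sub_zero]
      rw [show Qw 0 = [] from rfl, sh_nil_left, sh_nil_left, C_δ]
      rfl
    | j + 1 =>
      rw [if_neg (Nat.succ_ne_zero j)]
      simp only [Nat.succ_sub_one]
      rw [Qw_succ, show Pw (m + 1 - (j + 1)) = (0 : Fin 2) :: Qw (m + 1 - (j + 1)) from rfl,
        sh_cc, smul_add]
  rw [Un, Finset.sum_congr rfl key, Finset.sum_add_distrib]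
  congr 1
  · rw [Finset.sum_range_succ', if_pos rfl, add_zero, map_neg, Sn, map_sum,
      ← Finset.sum_neg_distrib]
    refine Finset.sum_congr rfl fun i _ => ?_
    rw [if_neg (Nat.succ_ne_zero i)]
    simp only [Nat.succ_sub_one]
    rw [show m + 1 - (i + 1) = m - i from by omega, map_smul, pow_succ, mul_neg_one, neg_smul]
  · rw [Tn, map_sum]
    refine Finset.sum_congr rfl fun i _ => ?_
    rw [map_smul]

lemma T_succ (m : ℕ) :
    Tn (m + 1) = C 1 ((1 - (-1 : ℚ) ^ m) • Un m) := by
  have key : ∀ i ∈ Finset.range (m + 2),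
      (-1 : ℚ) ^ i • sh (δ (Qw i)) (δ (Qw (m + 1 - i))) =
        (if i = 0 then 0 else (-1 : ℚ) ^ i • C 1 (sh (δ (Pw (i - 1))) (δ (Qw (m + 1 - i)))))
          + (if i = m + 1 then 0
             else (-1 : ℚ) ^ i • C 1 (sh (δ (Qw i)) (δ (Pw (m - i))))) := by
    intro i hi
    match i with
    | 0 =>
      rw [if_pos rfl, zero_add, if_neg (Nat.succ_ne_zero m).symm]
      simp only [pow_zero, one_smul, Nat.sub_zero]
      rw [show Qw 0 = [] from rfl, sh_nil_left, sh_nil_left, C_δ]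
      rfl
    | j + 1 =>
      rw [if_neg (Nat.succ_ne_zero j)]
      simp only [Nat.succ_sub_one]
      rcases eq_or_lt_of_le (Nat.lt_succ_iff.mp (Finset.mem_range.mp hi)) with hj | hj
      · -- j + 1 = m + 1
        have hjm : j = m := Nat.succ_injective hj
        subst hjm
        rw [if_pos rfl, add_zero, Nat.sub_self, show Qw 0 = [] from rfl, sh_nil_right,
          sh_nil_right, C_δ, Qw_succ]
      · -- j + 1 ≤ m
        have h1 : j + 1 ≠ m + 1 := by omega
        have h2 : m + 1 - (j + 1) = (m - (j + 1)) + 1 := by omega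
        rw [if_neg h1, h2, Qw_succ, Qw_succ, sh_cc, smul_add, ← Qw_succ, ← h2]
  rw [Tn, Finset.sum_congr rfl key, Finset.sum_add_distrib]
  have hg : (∑ i ∈ Finset.range (m + 2),
      (if i = 0 then 0
       else (-1 : ℚ) ^ i • C 1 (sh (δ (Pw (i - 1))) (δ (Qw (m + 1 - i)))))) =
      -(C 1 (Vn m)) := by
    rw [Finset.sum_range_succ', if_pos rfl, add_zero, Vn, map_sum, ← Finset.sum_neg_distrib]
    refine Finset.sum_congr rfl fun i _ => ?_
    rw [if_neg (Nat.succ_ne_zero i)]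
    simp only [Nat.succ_sub_one]
    rw [show m + 1 - (i + 1) = m - i from by omega, map_smul, pow_succ, mul_neg_one, neg_smul]
  have hh : (∑ i ∈ Finset.range (m + 2),
      (if i = m + 1 then 0
       else (-1 : ℚ) ^ i • C 1 (sh (δ (Qw i)) (δ (Pw (m - i)))))) = C 1 (Un m) := by
    rw [Finset.sum_range_succ, if_pos rfl, add_zero, Un, map_sum]
    refine Finset.sum_congr rfl fun i hi => ?_
    have : i ≠ m + 1 := by have := Finset.mem_range.mp hi; omega
    rw [if_neg this, map_smul]
  rw [hg, hh, V_eq, neg_add_eq_sub, sub_smul, one_smul, map_sub, map_smul]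

lemma S_zero : Sn 0 = (2 : ℚ) • δ [0, 0] := by
  rw [Sn, Finset.sum_range_one]
  simp only [pow_zero, one_smul, Nat.sub_zero]
  rw [show Pw 0 = [(0 : Fin 2)] from rfl, sh_δδ, shuffles_cons_cons, shuffles_nil_left,
    shuffles_nil_right]
  simp [two_smul]

lemma S_even : ∀ k : ℕ, Sn (2 * k) =
    ((-1 : ℚ) ^ k * 2 ^ (2 * k + 1)) • δ ((0 : Fin 2) :: (0 : Fin 2) :: alt4 1 1 0 0 k)
  | 0 => by
    rw [show 2 * 0 = 0 from rfl, S_zero]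
    norm_num [alt4]
  | k + 1 => by
    have IH := S_even k
    have h1 : Sn (2 * k + 1) = 0 := S_odd ⟨k, by ring⟩
    have h2 : Tn (2 * k + 1) = 0 := by
      rw [show 2 * k + 1 = 2 * k + 1 from rfl, T_succ,
        Even.neg_one_pow ⟨k, by ring⟩]
      norm_num
    have h3 : Un (2 * k + 1) =
        -(((-1 : ℚ) ^ k * 2 ^ (2 * k + 1)) • δ ((1 : Fin 2) :: 0 :: 0 :: alt4 1 1 0 0 k)) := by
      rw [U_succ, h2, map_zero, add_zero, IH, map_neg, map_smul, C_δ]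
    rw [show 2 * (k + 1) = (2 * k + 1) + 1 from by ring, S_eq, U_succ, h1, neg_zero, map_zero,
      zero_add, T_succ, Odd.neg_one_pow (⟨k, by ring⟩ : Odd (2 * k + 1)),
      Even.neg_one_pow (⟨k + 1, by ring⟩ : Even (2 * k + 1 + 1)), h3,
      show alt4 (1 : Fin 2) 1 0 0 (k + 1) = 1 :: 1 :: 0 :: 0 :: alt4 1 1 0 0 k from rfl]
    simp only [map_smul, map_neg, smul_neg, C_δ, smul_smul]
    rw [← neg_smul]
    congr 1
    ring

theorem stmt8 (n : ℕ) :
    ∑ i ∈ Finset.range (n + 1),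
        (-1 : ℚ) ^ i •
          sh (Finsupp.single ((0 : Fin 2) :: alt2 (1 : Fin 2) 0 i) 1)
            (Finsupp.single ((0 : Fin 2) :: alt2 (1 : Fin 2) 0 (n - i)) 1) =
      if Even n then
        ((-1 : ℚ) ^ (n / 2) * 2 ^ (n + 1)) •
          Finsupp.single ((0 : Fin 2) :: (0 : Fin 2) :: alt4 (1 : Fin 2) 1 0 0 (n / 2)) (1 : ℚ)
      else 0 := by
  by_cases h : Even n
  · rw [if_pos h]
    obtain ⟨k, hk⟩ := h
    have hn : n = 2 * k := by omega
    subst hn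
    rw [show 2 * k / 2 = k from by omega]
    exact S_even k
  · rw [if_neg h]
    exact S_odd (Nat.not_even_iff_odd.mp h)
end

section
/- For every nonnegative integer n one has ζ_1(({2}^n)) = −2 Σ_{i=0}^{n} (−1)^{i} ζ^reg(2i+1) ζ(({2}^{n−i})), where in particular ζ^reg(1)=0. -/
open scoped BigOperators

noncomputable section

/-- The multiple zeta value of an index, given as a list of positive integers
(for admissible indices this is the convergent sum). -/
def mzv (k : List ℕ) : ℝ :=
  ∑' f : {f : Fin k.length → ℕ+ // StrictMono f},
    ∏ i : Fin k.length, ((f.1 i : ℝ) ^ (k.get i))⁻¹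

/-- The regularized multiple zeta value. -/
def mzvReg (k : List ℕ) : ℝ :=
  if k = [] then 1
  else if 2 ≤ k.getLastD 0 then mzv k
  else if k = [1] then 0
  else if k.dropLast ≠ [] ∧ 2 ≤ k.dropLast.getLastD 0 ∧ k.getLastD 0 = 1 then
    (- ∑ i ∈ Finset.range k.dropLast.length,
        mzv (k.dropLast.take i ++ 1 :: k.dropLast.drop i))
    - ∑ i ∈ Finset.range k.dropLast.length,
        mzv (k.dropLast.take i ++ (k.dropLast.getD i 0 + 1) :: k.dropLast.drop (i + 1))
  else 0

/-- `ζ_m(k)`. -/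
def mzvM (m : ℕ) (k : List ℕ) : ℝ :=
  ∑ l ∈ Finset.Nat.antidiagonalTuple k.length m,
    mzvReg (List.ofFn fun i => k.get i + l i) *
      ∏ i : Fin k.length, ((k.get i + l i - 1).choose (l i) : ℝ)

/-- The `m`-th `t`-adic symmetric multiple zeta coefficient `c_m(k)`. -/
def smzvCoeff (m : ℕ) (k : List ℕ) : ℝ :=
  ∑ i ∈ Finset.range (k.length + 1),
    (-1 : ℝ) ^ ((k.drop i).sum) * mzvReg (k.take i) * mzvM m ((k.drop i).reverse)

end

open Finset

noncomputable section Aux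

def zz (m : ℕ+) : ℝ := ((m : ℝ) ^ 2)⁻¹
def yy (m : ℕ+) : ℝ := (m : ℝ)⁻¹

lemma m_pos (m : ℕ+) : (0:ℝ) < (m:ℝ) := by exact_mod_cast m.pos
lemma m_one_le (m : ℕ+) : (1:ℝ) ≤ (m:ℝ) := by exact_mod_cast m.one_le

lemma zz_nonneg (m : ℕ+) : 0 ≤ zz m := by unfold zz; positivity
lemma zz_le_one (m : ℕ+) : zz m ≤ 1 := by
  rw [zz, inv_le_one_iff₀]
  right; nlinarith [m_one_le m]
lemma yy_nonneg (m : ℕ+) : 0 ≤ yy m := by unfold yy; positivity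
lemma yy_le_one (m : ℕ+) : yy m ≤ 1 := by
  rw [yy, inv_le_one_iff₀]; right; exact m_one_le m

lemma zz_summable : Summable zz := by
  have h : Summable (fun n : ℕ => ((n : ℝ) ^ 2)⁻¹) := by
    simpa [one_div] using Real.summable_one_div_nat_pow.mpr (by norm_num : 1 < 2)
  exact h.comp_injective PNat.coe_injective

def PZ (s : Finset ℕ+) : ℝ := ∏ k ∈ s, zz k

lemma PZ_nonneg (s : Finset ℕ+) : 0 ≤ PZ s := Finset.prod_nonneg fun k _ => zz_nonneg k

lemma PZ_summable : Summable PZ := by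
  apply summable_of_sum_le (c := Real.exp (∑' m, zz m)) (fun s => PZ_nonneg s)
  intro u
  set T := u.sup id with hT
  have hsub : u ⊆ T.powerset := by
    intro s hs
    exact Finset.mem_powerset.mpr (Finset.le_sup (f := id) hs)
  calc ∑ s ∈ u, PZ s ≤ ∑ s ∈ T.powerset, PZ s := by
        exact Finset.sum_le_sum_of_subset_of_nonneg hsub fun s _ _ => PZ_nonneg s
    _ = ∏ k ∈ T, (zz k + 1) := by
        rw [Finset.prod_add]
        refine Finset.sum_congr rfl fun s _ => ?_
        simp [PZ]
    _ ≤ ∏ k ∈ T, Real.exp (zz k) := by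
        refine Finset.prod_le_prod (fun k _ => add_nonneg (zz_nonneg k) zero_le_one) fun k _ => Real.add_one_le_exp _
    _ = Real.exp (∑ k ∈ T, zz k) := (Real.exp_sum T zz).symm
    _ ≤ Real.exp (∑' m, zz m) := by
        apply Real.exp_le_exp.mpr
        exact Summable.sum_le_tsum T (fun m _ => zz_nonneg m) zz_summable

end Aux

noncomputable section Core
open Classical

def Ez (n : ℕ) : ℝ := ∑' s : Finset ℕ+, if s.card = n then PZ s else 0
def Az (m : ℕ+) (n : ℕ) : ℝ := ∑' s : Finset ℕ+, if s.card = n ∧ m ∉ s then PZ s else 0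
def Dz (m : ℕ+) (n : ℕ) : ℝ := ∑' s : Finset ℕ+, if s.card = n ∧ m ∈ s then PZ s else 0

lemma summable_le_PZ {f : Finset ℕ+ → ℝ} (h : ∀ s, f s = 0 ∨ f s = PZ s) :
    Summable f := by
  refine Summable.of_nonneg_of_le (fun s => ?_) (fun s => ?_) PZ_summable <;>
    rcases h s with h' | h' <;> simp [h', PZ_nonneg s]

lemma summable_if {p : Finset ℕ+ → Prop} [DecidablePred p] :
    Summable (fun s => if p s then PZ s else 0) :=
  summable_le_PZ (fun s => by split <;> [right; left] <;> rfl)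

lemma summable_Ez (n : ℕ) : Summable (fun s : Finset ℕ+ => if s.card = n then PZ s else 0) :=
  summable_if

lemma summable_Az (m : ℕ+) (n : ℕ) :
    Summable (fun s : Finset ℕ+ => if s.card = n ∧ m ∉ s then PZ s else 0) :=
  summable_if

lemma summable_Dz (m : ℕ+) (n : ℕ) :
    Summable (fun s : Finset ℕ+ => if s.card = n ∧ m ∈ s then PZ s else 0) :=
  summable_if

lemma Ez_split (m : ℕ+) (n : ℕ) : Ez n = Az m n + Dz m n := by
  rw [Az, Dz, ← Summable.tsum_add (summable_Az m n) (summable_Dz m n)]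
  refine tsum_congr fun s => ?_
  by_cases h1 : s.card = n <;> by_cases h2 : m ∈ s <;> simp [h1, h2]

def insErase (m : ℕ+) : Finset ℕ+ ≃ Finset ℕ+ :=
  Function.Involutive.toPerm (fun s => if m ∈ s then s.erase m else insert m s) (by
    intro s
    by_cases h : m ∈ s <;>
      simp [h, Finset.erase_insert, Finset.insert_erase, Finset.notMem_erase])

lemma Dz_succ (m : ℕ+) (n : ℕ) : Dz m (n + 1) = zz m * Az m n := by
  rw [Az, ← Summable.tsum_mul_left _ (summable_Az m n)]
  rw [Dz, ← (insErase m).tsum_eq (fun s => if s.card = n + 1 ∧ m ∈ s then PZ s else 0)]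
  refine tsum_congr fun s => ?_
  by_cases h : m ∈ s
  · have h1 : insErase m s = s.erase m := by simp [insErase, Function.Involutive.toPerm, h]
    rw [h1]
    simp [Finset.notMem_erase, h]
  · have h1 : insErase m s = insert m s := by simp [insErase, Function.Involutive.toPerm, h]
    rw [h1]
    by_cases h2 : s.card = n
    · simp [Finset.card_insert_of_notMem h, h2, h, PZ, Finset.prod_insert h]
    · have : ¬ (insert m s).card = n + 1 := by
        rw [Finset.card_insert_of_notMem h]; omega
      simp [this, h2, h]

lemma Ez_zero : Ez 0 = 1 := by
  rw [Ez, tsum_eq_single (∅ : Finset ℕ+)]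
  · simp [PZ]
  · intro s hs
    rw [if_neg]
    simpa [Finset.card_eq_zero] using hs

lemma Dz_zero (m : ℕ+) : Dz m 0 = 0 := by
  rw [Dz]
  convert tsum_zero with s
  rw [if_neg]
  rintro ⟨h1, h2⟩
  rw [Finset.card_eq_zero] at h1
  simp [h1] at h2

lemma key (m : ℕ+) : ∀ n : ℕ,
    ∑ i ∈ Finset.range n, (-1 : ℝ) ^ i * zz m ^ (i + 1) * Ez (n - 1 - i) = Dz m n
  | 0 => by simp [Dz_zero]
  | (n + 1) => by
    rw [Finset.sum_range_succ']
    have h1 : ∀ i ∈ Finset.range n,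
        (-1 : ℝ) ^ (i+1) * zz m ^ (i + 1 + 1) * Ez (n + 1 - 1 - (i+1)) =
          -(zz m * ((-1 : ℝ) ^ i * zz m ^ (i + 1) * Ez (n - 1 - i))) := by
      intro i hi
      have : n + 1 - 1 - (i + 1) = n - 1 - i := by omega
      rw [this]; ring
    rw [Finset.sum_congr rfl h1, Finset.sum_neg_distrib, ← Finset.mul_sum, key m n,
      Dz_succ m n]
    have h2 : n + 1 - 1 - 0 = n := by omega
    rw [h2, Ez_split m n]
    ring

end Core

noncomputable section Swap
open Classical

def Tz (n : ℕ) : ℝ :=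
  ∑' s : Finset ℕ+, if s.card = n then (∑ k ∈ s, yy k) * PZ s else 0

lemma sum_yy_le (s : Finset ℕ+) : ∑ k ∈ s, yy k ≤ s.card := by
  calc ∑ k ∈ s, yy k ≤ ∑ _k ∈ s, (1:ℝ) := Finset.sum_le_sum fun k _ => yy_le_one k
    _ = s.card := by simp

lemma summable_Tz (n : ℕ) :
    Summable (fun s : Finset ℕ+ => if s.card = n then (∑ k ∈ s, yy k) * PZ s else 0) := by
  refine Summable.of_nonneg_of_le (fun s => ?_) (fun s => ?_) (PZ_summable.mul_left (n : ℝ))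
  · split
    · exact mul_nonneg (Finset.sum_nonneg fun k _ => yy_nonneg k) (PZ_nonneg s)
    · exact le_rfl
  · split
    · next h =>
        refine mul_le_mul_of_nonneg_right ?_ (PZ_nonneg s) |>.trans_eq rfl
        rw [← h]; exact sum_yy_le s
    · exact mul_nonneg (Nat.cast_nonneg n) (PZ_nonneg s)

def gg (n : ℕ) : Finset ℕ+ × ℕ+ → ℝ := fun p =>
  if p.1.card = n ∧ p.2 ∈ p.1 then yy p.2 * PZ p.1 else 0

lemma gg_nonneg (n : ℕ) : 0 ≤ gg n := by
  intro p
  rw [gg]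
  split
  · exact mul_nonneg (yy_nonneg _) (PZ_nonneg _)
  · exact le_rfl

lemma gg_fiber (n : ℕ) (s : Finset ℕ+) :
    ∑' m : ℕ+, gg n (s, m) = if s.card = n then (∑ k ∈ s, yy k) * PZ s else 0 := by
  rw [tsum_eq_sum (f := fun m : ℕ+ => gg n (s, m)) (s := s) (fun m hm => by simp [gg, hm])]
  by_cases h : s.card = n
  · rw [if_pos h, Finset.sum_mul]
    apply Finset.sum_congr rfl
    intro m hm
    simp [gg, h, hm]
  · simp [gg, h]

lemma gg_summable (n : ℕ) : Summable (gg n) := by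
  rw [summable_prod_of_nonneg (gg_nonneg n)]
  constructor
  · intro s
    exact summable_of_ne_finset_zero (s := s) (fun m hm => by simp [gg, hm])
  · refine Summable.congr (summable_Tz n) fun s => (gg_fiber n s).symm

lemma yD_eq_Tz (n : ℕ) : ∑' m : ℕ+, yy m * Dz m n = Tz n := by
  have h1 : ∀ m : ℕ+, yy m * Dz m n = ∑' s : Finset ℕ+, gg n (s, m) := by
    intro m
    rw [Dz, ← Summable.tsum_mul_left _ (summable_Dz m n)]
    refine tsum_congr fun s => ?_
    by_cases h : s.card = n ∧ m ∈ s <;> simp [gg, h]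
  calc ∑' m : ℕ+, yy m * Dz m n = ∑' (m : ℕ+) (s : Finset ℕ+), gg n (s, m) :=
        tsum_congr h1
    _ = ∑' (s : Finset ℕ+) (m : ℕ+), gg n (s, m) := by
        have hswap : Summable (fun p : ℕ+ × Finset ℕ+ => gg n p.swap) :=
          (gg_summable n).prod_symm
        have hswap' : Summable (fun p : ℕ+ × Finset ℕ+ => gg n (p.2, p.1)) := hswap
        rw [← Summable.tsum_prod' (f := fun p : ℕ+ × Finset ℕ+ => gg n (p.2, p.1)) hswap'
            (fun m => hswap'.prod_factor m),
          ← Summable.tsum_prod' (f := gg n) (gg_summable n)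
            (fun s => summable_of_ne_finset_zero (f := fun m : ℕ+ => gg n (s, m)) (s := s)
              (fun m hm => by simp [gg, hm]))]
        exact (Equiv.prodComm (ℕ+) (Finset ℕ+)).tsum_eq (gg n)
    _ = Tz n := by
        rw [Tz]
        exact tsum_congr fun s => gg_fiber n s

end Swap

noncomputable section Equiv2

def finsetEquiv (n : ℕ) : {s : Finset ℕ+ // s.card = n} ≃ {f : Fin n → ℕ+ // StrictMono f} where
  toFun s := ⟨fun i => s.1.orderEmbOfFin s.2 i, (s.1.orderEmbOfFin s.2).strictMono⟩
  invFun f := ⟨Finset.univ.map ⟨f.1, f.2.injective⟩, by simp⟩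
  left_inv s := by
    refine Subtype.ext ?_
    ext a
    simp only [Finset.mem_map, Finset.mem_univ, true_and, Function.Embedding.coeFn_mk]
    constructor
    · rintro ⟨i, rfl⟩
      exact Finset.orderEmbOfFin_mem s.1 s.2 i
    · intro ha
      have : a ∈ Set.range (s.1.orderEmbOfFin s.2) := by
        rw [Finset.range_orderEmbOfFin]; exact ha
      exact this
  right_inv f := by
    refine Subtype.ext ?_
    have := Finset.orderEmbOfFin_unique
      (s := Finset.univ.map ⟨f.1, f.2.injective⟩) (f := f.1)
      (by simp) (fun x => by simp) f.2
    exact this.symm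

lemma map_eq_self (s : Finset ℕ+) {n : ℕ} (h : s.card = n) :
    Finset.univ.map ⟨fun i => s.orderEmbOfFin h i, (s.orderEmbOfFin h).injective⟩ = s := by
  ext a
  simp only [Finset.mem_map, Finset.mem_univ, true_and, Function.Embedding.coeFn_mk]
  constructor
  · rintro ⟨i, rfl⟩
    exact Finset.orderEmbOfFin_mem s h i
  · intro ha
    have : a ∈ Set.range (s.orderEmbOfFin h) := by
      rw [Finset.range_orderEmbOfFin]; exact ha
    exact this

lemma prod_emb (s : Finset ℕ+) {n : ℕ} (h : s.card = n) (g : ℕ+ → ℝ) :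
    ∏ i : Fin n, g (s.orderEmbOfFin h i) = ∏ k ∈ s, g k := by
  conv_rhs => rw [← map_eq_self s h]
  rw [Finset.prod_map]
  rfl

lemma sum_emb (s : Finset ℕ+) {n : ℕ} (h : s.card = n) (g : ℕ+ → ℝ) :
    ∑ i : Fin n, g (s.orderEmbOfFin h i) = ∑ k ∈ s, g k := by
  conv_rhs => rw [← map_eq_self s h]
  rw [Finset.sum_map]
  rfl

end Equiv2

noncomputable section MzvLemmas
open Classical

lemma mzv_eq_tsum (k : List ℕ) (n : ℕ) (h : k.length = n) (w : Fin n → ℕ)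
    (hw : ∀ i : Fin k.length, k.get i = w (Fin.cast h i)) :
    mzv k = ∑' f : {f : Fin n → ℕ+ // StrictMono f},
      ∏ i : Fin n, ((f.1 i : ℝ) ^ (w i))⁻¹ := by
  subst h
  rw [mzv]
  refine tsum_congr fun f => ?_
  refine Finset.prod_congr rfl fun i _ => ?_
  rw [hw i]
  rfl

lemma tsum_card_subtype (F : Finset ℕ+ → ℝ) (r : ℕ) :
    (∑' s : Finset ℕ+, if s.card = r then F s else 0) =
      ∑' x : {s : Finset ℕ+ // s.card = r}, F x.1 := by
  refine Eq.trans (tsum_congr fun s => ?_) (tsum_subtype {s : Finset ℕ+ | s.card = r} F).symm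
  by_cases h : s.card = r <;> simp [Set.indicator, h]

lemma mzv_replicate (r : ℕ) : mzv (List.replicate r 2) = Ez r := by
  rw [mzv_eq_tsum (List.replicate r 2) r List.length_replicate (fun _ => 2)
    (fun i => by simp), ← (finsetEquiv r).tsum_eq, Ez, tsum_card_subtype PZ r]
  refine tsum_congr fun s => ?_
  exact prod_emb s.1 s.2 zz

def oneEquiv : ℕ+ ≃ {f : Fin 1 → ℕ+ // StrictMono f} where
  toFun m := ⟨fun _ => m, fun a b hab => absurd (Subsingleton.elim a b) hab.ne⟩
  invFun f := f.1 0
  left_inv m := rfl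
  right_inv f := Subtype.ext (funext fun i => by rw [Subsingleton.elim i 0])

lemma mzv_odd (i : ℕ) : mzv [2 * (i + 1) + 1] = ∑' m : ℕ+, yy m * zz m ^ (i + 1) := by
  rw [mzv_eq_tsum [2 * (i + 1) + 1] 1 rfl (fun _ => 2 * (i + 1) + 1)
    (fun j => by fin_cases j <;> rfl), ← oneEquiv.tsum_eq]
  refine tsum_congr fun m => ?_
  rw [Fin.prod_univ_one]
  show ((m : ℝ) ^ (2 * (i + 1) + 1))⁻¹ = yy m * zz m ^ (i + 1)
  rw [yy, zz, inv_pow, ← mul_inv]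
  congr 1
  ring

def wj (n : ℕ) (j : Fin n) : Fin n → ℕ := fun i => 2 + (Pi.single j 1 : Fin n → ℕ) i

lemma mzv_three (n : ℕ) (j : Fin n) :
    mzv (List.ofFn (wj n j)) =
      ∑' x : {s : Finset ℕ+ // s.card = n}, yy (x.1.orderEmbOfFin x.2 j) * PZ x.1 := by
  rw [mzv_eq_tsum _ n List.length_ofFn (wj n j)
    (fun i => by simp; rfl), ← (finsetEquiv n).tsum_eq]
  refine tsum_congr fun s => ?_
  have hsplit : ∀ (f : Fin n → ℕ+),
      (∏ i : Fin n, (((f i : ℝ)) ^ (wj n j i))⁻¹)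
        = yy (f j) * ∏ i : Fin n, zz (f i) := by
    intro f
    have h1 : ∀ i : Fin n, (((f i : ℝ)) ^ (wj n j i))⁻¹
        = zz (f i) * (((f i : ℝ)) ^ ((Pi.single j 1 : Fin n → ℕ) i))⁻¹ := by
      intro i
      rw [wj, pow_add, mul_inv, zz]
    rw [Finset.prod_congr rfl (fun i _ => h1 i), Finset.prod_mul_distrib]
    have h2 : ∏ i : Fin n, (((f i : ℝ)) ^ ((Pi.single j 1 : Fin n → ℕ) i))⁻¹ = yy (f j) := by
      rw [Finset.prod_eq_single j]
      · rw [Pi.single_eq_same, pow_one, yy]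
      · intro b _ hb
        rw [Pi.single_eq_of_ne hb, pow_zero, inv_one]
      · intro h
        exact absurd (Finset.mem_univ j) h
    rw [h2, mul_comm]
  rw [hsplit]
  congr 1
  exact prod_emb s.1 s.2 zz

lemma getLastD_ge_two_aux : ∀ (l : List ℕ) (d : ℕ),
    (∀ x ∈ l, 2 ≤ x) → 2 ≤ d → 2 ≤ l.getLastD d
  | [], d => fun _ hd => hd
  | a :: t, d => fun h hd => by
      rw [List.getLastD_cons]
      exact getLastD_ge_two_aux t a (fun x hx => h x (List.mem_cons_of_mem a hx))
        (h a List.mem_cons_self)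

lemma getLastD_ge_two (l : List ℕ) (hl : l ≠ []) (h : ∀ x ∈ l, 2 ≤ x) :
    2 ≤ l.getLastD 0 := by
  match l with
  | [] => exact absurd rfl hl
  | a :: t =>
    rw [List.getLastD_cons]
    exact getLastD_ge_two_aux t a (fun x hx => h x (List.mem_cons_of_mem a hx))
      (h a List.mem_cons_self)

lemma mzvReg_eq_mzv (k : List ℕ) (h0 : k ≠ []) (h2 : 2 ≤ k.getLastD 0) :
    mzvReg k = mzv k := by rw [mzvReg, if_neg h0, if_pos h2]

lemma mzvReg_one : mzvReg [1] = 0 := by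
  rw [mzvReg, if_neg (by simp), if_neg (by simp), if_pos rfl]

lemma mzvReg_odd (i : ℕ) : mzvReg [2 * (i + 1) + 1] = mzv [2 * (i + 1) + 1] := by
  refine mzvReg_eq_mzv _ (by simp) ?_
  have h : ([2 * (i + 1) + 1] : List ℕ).getLastD 0 = 2 * (i + 1) + 1 := rfl
  omega

lemma mzvReg_three (n : ℕ) (j : Fin n) :
    mzvReg (List.ofFn (wj n j)) = mzv (List.ofFn (wj n j)) := by
  refine mzvReg_eq_mzv _ ?_ ?_
  · intro h
    have h1 := List.length_ofFn (f := wj n j)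
    rw [h] at h1
    simp only [List.length_nil] at h1
    have := j.pos
    omega
  · refine getLastD_ge_two _ ?_ ?_
    · intro h
      have h1 := List.length_ofFn (f := wj n j)
      rw [h] at h1
      simp only [List.length_nil] at h1
      have := j.pos
      omega
    · intro x hx
      rw [List.mem_ofFn] at hx
      obtain ⟨i, rfl⟩ := hx
      simp [wj]

end MzvLemmas

noncomputable section MzvM
open Classical

lemma antidiagonalTuple_one (N : ℕ) :
    Finset.Nat.antidiagonalTuple N 1 =
      Finset.univ.image (fun j : Fin N => (Pi.single j 1 : Fin N → ℕ)) := by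
  ext l
  rw [Finset.Nat.mem_antidiagonalTuple, Finset.mem_image]
  constructor
  · intro h
    have hne : ∃ j ∈ Finset.univ, l j ≠ 0 := by
      apply Finset.exists_ne_zero_of_sum_ne_zero
      rw [h]; exact one_ne_zero
    obtain ⟨j, _, hj⟩ := hne
    have hsum : ∑ i ∈ Finset.univ.erase j, l i + l j = 1 := by
      rw [Finset.sum_erase_add _ _ (Finset.mem_univ j)]; exact h
    have hlj : l j = 1 ∧ ∑ i ∈ Finset.univ.erase j, l i = 0 := by omega
    have hzero : ∀ i ∈ Finset.univ.erase j, l i = 0 :=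
      (Finset.sum_eq_zero_iff).mp hlj.2
    refine ⟨j, Finset.mem_univ j, ?_⟩
    funext i
    by_cases hij : i = j
    · subst hij; rw [Pi.single_eq_same, hlj.1]
    · rw [Pi.single_eq_of_ne hij, hzero i (Finset.mem_erase.mpr ⟨hij, Finset.mem_univ i⟩)]
  · rintro ⟨j, _, rfl⟩
    simp [Pi.single_apply]

lemma mzvM_one (k : List ℕ) (n : ℕ) (h : k.length = n) (w : Fin n → ℕ)
    (hw : ∀ i : Fin k.length, k.get i = w (Fin.cast h i)) :
    mzvM 1 k = ∑ j : Fin n,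
      (w j : ℝ) * mzvReg (List.ofFn fun i => w i + (Pi.single j 1 : Fin n → ℕ) i) := by
  subst h
  have hw' : ∀ i, k.get i = w i := fun i => hw i
  rw [mzvM, antidiagonalTuple_one]
  rw [Finset.sum_image (f := fun l => mzvReg (List.ofFn fun i => k.get i + l i) *
      ∏ i : Fin k.length, ((k.get i + l i - 1).choose (l i) : ℝ))
    (g := fun j : Fin k.length => (Pi.single j 1 : Fin k.length → ℕ)) ?_]
  · refine Finset.sum_congr rfl fun j _ => ?_
    have hb : (∏ i : Fin k.length,
        ((k.get i + (Pi.single j 1 : Fin k.length → ℕ) i - 1).choose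
          ((Pi.single j 1 : Fin k.length → ℕ) i) : ℝ)) = (w j : ℝ) := by
      rw [Finset.prod_eq_single j]
      · rw [Pi.single_eq_same, hw' j, Nat.add_sub_cancel, Nat.choose_one_right]
      · intro b _ hb
        rw [Pi.single_eq_of_ne hb, Nat.choose_zero_right, Nat.cast_one]
      · intro hj; exact absurd (Finset.mem_univ j) hj
    rw [hb, mul_comm]
    have hfun : (fun i => k.get i + (Pi.single j 1 : Fin k.length → ℕ) i)
        = fun i => w i + (Pi.single j 1 : Fin k.length → ℕ) i :=
      funext fun i => by rw [hw' i]
    rw [hfun]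
  · intro a _ b _ hab
    by_contra hne
    have h2 := congrFun hab a
    simp only [Pi.single_eq_same, Pi.single_eq_of_ne hne] at h2
    exact one_ne_zero h2

end MzvM

noncomputable section Final
open Classical

lemma summable_yz (i : ℕ) : Summable (fun m : ℕ+ => yy m * zz m ^ (i + 1)) := by
  refine Summable.of_nonneg_of_le
    (fun m => mul_nonneg (yy_nonneg m) (pow_nonneg (zz_nonneg m) _)) (fun m => ?_) zz_summable
  calc yy m * zz m ^ (i + 1) ≤ 1 * zz m ^ 1 := by
        refine mul_le_mul (yy_le_one m) ?_ (pow_nonneg (zz_nonneg m) _) zero_le_one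
        exact pow_le_pow_of_le_one (zz_nonneg m) (zz_le_one m) (by omega)
    _ = zz m := by rw [one_mul, pow_one]


end Final

theorem stmt15 (n : ℕ) :
    mzvM 1 (List.replicate n 2) =
      -2 * ∑ i ∈ Finset.range (n + 1),
        (-1 : ℝ) ^ i * mzvReg [2 * i + 1] * mzv (List.replicate (n - i) 2) := by
  have hL : mzvM 1 (List.replicate n 2) = 2 * Tz n := by
    rw [mzvM_one (List.replicate n 2) n List.length_replicate (fun _ => 2)
      (fun i => by simp)]
    have hterm : ∀ j : Fin n,
        (((fun _ : Fin n => (2:ℕ)) j : ℕ) : ℝ) *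
          mzvReg (List.ofFn fun i => (fun _ : Fin n => (2:ℕ)) i + (Pi.single j 1 : Fin n → ℕ) i)
        = 2 * ∑' x : {s : Finset ℕ+ // s.card = n},
            yy (x.1.orderEmbOfFin x.2 j) * PZ x.1 := by
      intro j
      have h1 : (List.ofFn fun i => (fun _ : Fin n => (2:ℕ)) i + (Pi.single j 1 : Fin n → ℕ) i)
          = List.ofFn (wj n j) := rfl
      rw [h1, mzvReg_three n j, mzv_three n j]
      norm_num
    rw [Finset.sum_congr rfl (fun j _ => hterm j), ← Finset.mul_sum]
    congr 1
    have hsummable : ∀ j : Fin n,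
        Summable (fun x : {s : Finset ℕ+ // s.card = n} =>
          yy (x.1.orderEmbOfFin x.2 j) * PZ x.1) := by
      intro j
      refine Summable.of_nonneg_of_le (fun x => mul_nonneg (yy_nonneg _) (PZ_nonneg _))
        (fun x => ?_) (PZ_summable.comp_injective Subtype.val_injective)
      calc yy _ * PZ x.1 ≤ 1 * PZ x.1 := mul_le_mul_of_nonneg_right (yy_le_one _) (PZ_nonneg _)
        _ = PZ x.1 := one_mul _
    rw [← Summable.tsum_finsetSum (fun j _ => hsummable j), Tz,
      tsum_card_subtype (fun s => (∑ k ∈ s, yy k) * PZ s) n]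
    refine tsum_congr fun x => ?_
    rw [← Finset.sum_mul, sum_emb x.1 x.2 yy]
  have hR : (-2 : ℝ) * ∑ i ∈ Finset.range (n+1),
      (-1:ℝ)^i * mzvReg [2*i+1] * mzv (List.replicate (n-i) 2) = 2 * Tz n := by
    rw [Finset.sum_range_succ']
    have h0 : (-1:ℝ)^0 * mzvReg [2*0+1] * mzv (List.replicate (n-0) 2) = 0 := by
      have h1 : mzvReg [2*0+1] = 0 := mzvReg_one
      rw [h1]; ring
    rw [h0, add_zero]
    have hterm : ∀ i ∈ Finset.range n,
        (-1:ℝ)^(i+1) * mzvReg [2*(i+1)+1] * mzv (List.replicate (n-(i+1)) 2)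
          = -(∑' m : ℕ+, (-1:ℝ)^i * (yy m * zz m^(i+1) * Ez (n-1-i))) := by
      intro i _
      rw [mzvReg_odd i, mzv_odd i, mzv_replicate]
      have hn : n - (i+1) = n - 1 - i := by omega
      rw [hn, tsum_mul_left, tsum_mul_right]
      ring
    rw [Finset.sum_congr rfl hterm, Finset.sum_neg_distrib,
      ← Summable.tsum_finsetSum (fun i _ => (((summable_yz i).mul_right _).mul_left _))]
    have hm : ∀ m : ℕ+,
        ∑ i ∈ Finset.range n, (-1:ℝ)^i * (yy m * zz m^(i+1) * Ez (n-1-i)) = yy m * Dz m n := by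
      intro m
      rw [← key m n, Finset.mul_sum]
      refine Finset.sum_congr rfl fun i _ => ?_
      ring
    rw [tsum_congr hm, yD_eq_Tz]
    ring
  rw [hL, ← hR]
end

section
/- If a and b are positive integers, then for every nonnegative integer n one has, in 𝓘, Σ_{i=0}^{n} (−1)^i (ai+b) * (({a}^{n−i})) = (b) ⧢ (({a}^n)), where (ai+b) and (b) denote indices of length one. -/
open scoped BigOperators

/-- `𝓘`, the `ℚ`-vector space with basis the set of all indices
(finite sequences of positive integers). -/
abbrev IndexSpace : Type := List ℕ+ →₀ ℚ

noncomputable section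

/-- Append the entry `a` at the end of every index in a linear combination. -/
def appendEntry (a : ℕ+) (f : IndexSpace) : IndexSpace :=
  Finsupp.mapDomain (fun w => w ++ [a]) f

/-- Auxiliary version of the harmonic product taking the two indices reversed. -/
def harmRev : List ℕ+ → List ℕ+ → IndexSpace
  | [], l => Finsupp.single l.reverse 1
  | k, [] => Finsupp.single k.reverse 1
  | a :: k, b :: l =>
      appendEntry a (harmRev k (b :: l)) + appendEntry b (harmRev (a :: k) l) +
        appendEntry (a + b) (harmRev k l)
termination_by k l => k.length + l.length

/-- The harmonic product `*` of two indices, as an element of `𝓘`. -/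
def harm (k l : List ℕ+) : IndexSpace := harmRev k.reverse l.reverse

/-- Auxiliary version of the shuffle product of indices taking the two indices reversed. -/
def shIRev : List ℕ+ → List ℕ+ → IndexSpace
  | [], l => Finsupp.single l.reverse 1
  | k, [] => Finsupp.single k.reverse 1
  | a :: k, b :: l => appendEntry a (shIRev k (b :: l)) + appendEntry b (shIRev (a :: k) l)
termination_by k l => k.length + l.length

/-- The shuffle product `⧢` of two indices, as an element of `𝓘`. -/
def shI (k l : List ℕ+) : IndexSpace := shIRev k.reverse l.reverse

end

lemma appendEntry_add (a : ℕ+) (f g : IndexSpace) :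
    appendEntry a (f + g) = appendEntry a f + appendEntry a g :=
  Finsupp.mapDomain_add

lemma appendEntry_smul (a : ℕ+) (q : ℚ) (f : IndexSpace) :
    appendEntry a (q • f) = q • appendEntry a f :=
  Finsupp.mapDomain_smul q f

lemma appendEntry_single (a : ℕ+) (w : List ℕ+) (q : ℚ) :
    appendEntry a (Finsupp.single w q) = Finsupp.single (w ++ [a]) q :=
  Finsupp.mapDomain_single

lemma appendEntry_sum (a : ℕ+) (s : Finset ℕ) (f : ℕ → IndexSpace) :
    appendEntry a (∑ i ∈ s, f i) = ∑ i ∈ s, appendEntry a (f i) :=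
  Finsupp.mapDomain_finset_sum

lemma replicate_append_cons {α : Type*} (x : α) (m : ℕ) (l : List α) :
    List.replicate m x ++ (x :: l) = x :: (List.replicate m x ++ l) := by
  induction m with
  | zero => rfl
  | succ m ih => simp [List.replicate_succ, ih]

lemma harm_nil (c : ℕ+) : harm [c] [] = Finsupp.single [c] 1 := by
  simp [harm, harmRev]

lemma shI_nil (c : ℕ+) : shI [c] [] = Finsupp.single [c] 1 := by
  simp [shI, shIRev]

lemma harm_succ (a c : ℕ+) (m : ℕ) :
    harm [c] (List.replicate (m + 1) a) =
      Finsupp.single (List.replicate (m + 1) a ++ [c]) 1 +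
        appendEntry a (harm [c] (List.replicate m a)) +
        Finsupp.single (List.replicate m a ++ [c + a]) 1 := by
  rw [harm, harm, List.reverse_replicate, List.reverse_replicate, List.replicate_succ]
  show harmRev [c] (a :: List.replicate m a) = _
  rw [harmRev]
  simp only [harmRev, appendEntry_single, List.reverse_replicate, List.reverse_cons, List.reverse_nil,
    List.replicate_succ, List.append_assoc, List.singleton_append, List.cons_append,
    List.nil_append]
  rw [replicate_append_cons]

lemma shI_succ (a c : ℕ+) (m : ℕ) :
    shI [c] (List.replicate (m + 1) a) =
      Finsupp.single (List.replicate (m + 1) a ++ [c]) 1 +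
        appendEntry a (shI [c] (List.replicate m a)) := by
  rw [shI, shI, List.reverse_replicate, List.reverse_replicate, List.replicate_succ]
  show shIRev [c] (a :: List.replicate m a) = _
  rw [shIRev]
  simp only [shIRev, appendEntry_single, List.reverse_replicate, List.reverse_cons, List.reverse_nil,
    List.replicate_succ, List.append_assoc, List.singleton_append, List.cons_append,
    List.nil_append]
  rw [replicate_append_cons]

theorem stmt17 (a b : ℕ+) (n : ℕ) :
    ∑ i ∈ Finset.range (n + 1),
        (-1 : ℚ) ^ i •
          harm [(⟨(a : ℕ) * i + (b : ℕ), Nat.add_pos_right _ b.2⟩ : ℕ+)]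
            (List.replicate (n - i) a) =
      shI [b] (List.replicate n a) := by
  set c : ℕ → ℕ+ := fun i => (⟨(a : ℕ) * i + (b : ℕ), Nat.add_pos_right _ b.2⟩ : ℕ+) with hc
  have hc0 : c 0 = b := Subtype.ext (by show (a : ℕ) * 0 + (b : ℕ) = (b : ℕ); simp)
  have hcs : ∀ i, c i + a = c (i + 1) := fun i => Subtype.ext (by
    show (a : ℕ) * i + (b : ℕ) + (a : ℕ) = (a : ℕ) * (i + 1) + (b : ℕ); ring)
  induction n with
  | zero =>
    rw [Finset.sum_range_one, pow_zero, one_smul]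
    show harm [c 0] (List.replicate (0 - 0) a) = shI [b] (List.replicate 0 a)
    rw [hc0]
    show harm [b] [] = shI [b] []
    rw [harm_nil, shI_nil]
  | succ n ih =>
    rw [Finset.sum_range_succ]
    set A : ℕ → IndexSpace :=
      fun i => Finsupp.single (List.replicate (n + 1 - i) a ++ [c i]) 1 with hA
    have hlast : n + 1 - (n + 1) = 0 := by omega
    have step : ∀ i ∈ Finset.range (n + 1),
        (-1 : ℚ) ^ i • harm [c i] (List.replicate (n + 1 - i) a) =
          ((-1 : ℚ) ^ i • A i - (-1 : ℚ) ^ (i + 1) • A (i + 1)) +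
            appendEntry a ((-1 : ℚ) ^ i • harm [c i] (List.replicate (n - i) a)) := by
      intro i hi
      rw [Finset.mem_range] at hi
      have h1 : n + 1 - i = (n - i) + 1 := by omega
      have h2 : n + 1 - (i + 1) = n - i := by omega
      rw [appendEntry_smul, h1, harm_succ]
      simp only [hA, h2, h1, ← hcs i]
      rw [pow_succ]
      simp only [smul_add]
      module
    have ihc : ∑ i ∈ Finset.range (n + 1),
        (-1 : ℚ) ^ i • harm [c i] (List.replicate (n - i) a) =
          shI [b] (List.replicate n a) := ih
    have key : (∑ i ∈ Finset.range (n + 1),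
          (-1 : ℚ) ^ i • harm [c i] (List.replicate (n + 1 - i) a)) +
          (-1 : ℚ) ^ (n + 1) • harm [c (n + 1)] (List.replicate (n + 1 - (n + 1)) a) =
        shI [b] (List.replicate (n + 1) a) := by
      rw [Finset.sum_congr rfl step, Finset.sum_add_distrib, Finset.sum_range_sub',
        ← appendEntry_sum, ihc]
      have hAn : harm [c (n + 1)] (List.replicate (n + 1 - (n + 1)) a) = A (n + 1) := by
        rw [hlast]
        show harm [c (n + 1)] [] = _
        rw [harm_nil]
        simp [hA, hlast]
      have hA0 : A 0 = Finsupp.single (List.replicate (n + 1) a ++ [b]) 1 := by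
        simp [hA, hc0]
      rw [hAn, hA0, shI_succ]
      module
    exact key
end

section
/- If a and b are odd positive integers, then for every nonnegative integer n one has, in 𝓘, I_0(({a,b}^n)) = (−1)^n (({a+b}^n)). -/
open scoped BigOperators

/-- The `ℚ`-linear map `I₀ : 𝓘 → 𝓘`, given here on a single index. -/
noncomputable def I0 (k : List ℕ+) : IndexSpace :=
  ∑ i ∈ Finset.range (k.length + 1),
    ((-1 : ℚ) ^ (((k.drop i).map fun x => (x : ℕ)).sum)) •
      harm (k.take i) ((k.drop i).reverse)

namespace S18
lemma appendEntry_single (x : ℕ+) (w : List ℕ+) (c : ℚ) :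
    appendEntry x (Finsupp.single w c) = Finsupp.single (w ++ [x]) c := by
  simp [appendEntry, Finsupp.mapDomain_single]

lemma appendEntry_add (x : ℕ+) (f g : IndexSpace) :
    appendEntry x (f + g) = appendEntry x f + appendEntry x g :=
  Finsupp.mapDomain_add

lemma appendEntry_smul (x : ℕ+) (c : ℚ) (f : IndexSpace) :
    appendEntry x (c • f) = c • appendEntry x f :=
  Finsupp.mapDomain_smul c f

lemma appendEntry_sum (x : ℕ+) {ι : Type*} (s : Finset ι) (f : ι → IndexSpace) :
    appendEntry x (∑ i ∈ s, f i) = ∑ i ∈ s, appendEntry x (f i) :=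
  Finsupp.mapDomain_finset_sum

lemma appendEntry_sub (x : ℕ+) (f g : IndexSpace) :
    appendEntry x (f - g) = appendEntry x f - appendEntry x g := by
  rw [sub_eq_add_neg, appendEntry_add, ← neg_one_smul ℚ g, appendEntry_smul,
    neg_one_smul, ← sub_eq_add_neg]

lemma harmRev_nil (l : List ℕ+) : harmRev [] l = Finsupp.single l.reverse 1 := by
  cases l <;> rw [harmRev]

lemma harmRev_cons_nil (x : ℕ+) (k : List ℕ+) :
    harmRev (x::k) [] = Finsupp.single (x::k).reverse 1 := by
  rw [harmRev]; simp

lemma harmRev_cons_cons (x y : ℕ+) (k l : List ℕ+) : harmRev (x::k) (y::l) =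
    appendEntry x (harmRev k (y::l)) + appendEntry y (harmRev (x::k) l) +
        appendEntry (x+y) (harmRev k l) := by
  rw [harmRev]

lemma alt2_append {α : Type*} (x y : α) (n : ℕ) :
    alt2 x y (n+1) = alt2 x y n ++ [x, y] := by
  induction n with
  | zero => rfl
  | succ n ih =>
    show x :: y :: alt2 x y (n+1) = (x :: y :: alt2 x y n) ++ [x, y]
    conv_lhs => rw [ih]
    simp

lemma alt2_reverse {α : Type*} (x y : α) (n : ℕ) :
    (alt2 x y n).reverse = alt2 y x n := by
  induction n with
  | zero => rfl
  | succ n ih =>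
    show (x :: y :: alt2 x y n).reverse = _
    rw [alt2_append y x n, List.reverse_cons, List.reverse_cons, ih]
    simp

lemma alt2_length {α : Type*} (x y : α) (n : ℕ) : (alt2 x y n).length = 2*n := by
  induction n with
  | zero => rfl
  | succ n ih => show (x :: y :: alt2 x y n).length = _; simp [ih]; ring

lemma alt2_take_even {α : Type*} (x y : α) {j n : ℕ} (h : j ≤ n) :
    (alt2 x y n).take (2*j) = alt2 x y j := by
  induction j generalizing n with
  | zero => rfl
  | succ j ih =>
    obtain ⟨m, rfl⟩ := Nat.exists_eq_add_of_le (Nat.one_le_iff_ne_zero.mpr (by omega) : 1 ≤ n)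
    rw [Nat.add_comm 1 m]
    show List.take (2*(j+1)) (x :: y :: alt2 x y m) = _
    have : 2*(j+1) = (2*j) + 1 + 1 := by ring
    rw [this, List.take_succ_cons, List.take_succ_cons, ih (by omega)]
    rfl

lemma alt2_drop_even {α : Type*} (x y : α) {j n : ℕ} (h : j ≤ n) :
    (alt2 x y n).drop (2*j) = alt2 x y (n - j) := by
  induction j generalizing n with
  | zero => rfl
  | succ j ih =>
    obtain ⟨m, rfl⟩ := Nat.exists_eq_add_of_le (Nat.one_le_iff_ne_zero.mpr (by omega) : 1 ≤ n)
    rw [Nat.add_comm 1 m]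
    show List.drop (2*(j+1)) (x :: y :: alt2 x y m) = _
    have : 2*(j+1) = (2*j) + 1 + 1 := by ring
    rw [this, List.drop_succ_cons, List.drop_succ_cons, ih (by omega)]
    congr 1
    omega

lemma alt2_take_odd {α : Type*} (x y : α) {j n : ℕ} (h : j < n) :
    (alt2 x y n).take (2*j+1) = alt2 x y j ++ [x] := by
  induction j generalizing n with
  | zero =>
    obtain ⟨m, rfl⟩ := Nat.exists_eq_add_of_le (Nat.one_le_iff_ne_zero.mpr (by omega) : 1 ≤ n)
    rw [Nat.add_comm 1 m]
    show List.take (2*0+1) (x :: y :: alt2 x y m) = alt2 x y 0 ++ [x]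
    norm_num
    rfl
  | succ j ih =>
    obtain ⟨m, rfl⟩ := Nat.exists_eq_add_of_le (Nat.one_le_iff_ne_zero.mpr (by omega) : 1 ≤ n)
    rw [Nat.add_comm 1 m]
    show List.take (2*(j+1)+1) (x :: y :: alt2 x y m) = _
    have : 2*(j+1)+1 = (2*j+1) + 1 + 1 := by ring
    rw [this, List.take_succ_cons, List.take_succ_cons, ih (by omega)]
    rfl

lemma alt2_drop_odd {α : Type*} (x y : α) {j n : ℕ} (h : j < n) :
    (alt2 x y n).drop (2*j+1) = y :: alt2 x y (n - j - 1) := by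
  induction j generalizing n with
  | zero =>
    obtain ⟨m, rfl⟩ := Nat.exists_eq_add_of_le (Nat.one_le_iff_ne_zero.mpr (by omega) : 1 ≤ n)
    rw [Nat.add_comm 1 m]
    show List.drop 1 (x :: y :: alt2 x y m) = _
    simp
  | succ j ih =>
    obtain ⟨m, rfl⟩ := Nat.exists_eq_add_of_le (Nat.one_le_iff_ne_zero.mpr (by omega) : 1 ≤ n)
    rw [Nat.add_comm 1 m]
    show List.drop (2*(j+1)+1) (x :: y :: alt2 x y m) = _
    have : 2*(j+1)+1 = (2*j+1) + 1 + 1 := by ring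
    rw [this, List.drop_succ_cons, List.drop_succ_cons, ih (by omega)]
    congr 2
    omega

end S18

namespace S18

noncomputable def A (a b : ℕ+) (n j : ℕ) : IndexSpace :=
  harmRev (alt2 b a j) (alt2 a b (n - j))
noncomputable def B (a b : ℕ+) (n j : ℕ) : IndexSpace :=
  harmRev (a :: alt2 b a j) (b :: alt2 a b (n - 1 - j))
noncomputable def X (a b : ℕ+) (n j : ℕ) : IndexSpace :=
  harmRev (alt2 b a j) (b :: alt2 a b (n - j))
noncomputable def Y (a b : ℕ+) (n j : ℕ) : IndexSpace :=
  harmRev (a :: alt2 b a j) (alt2 a b (n - j))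

lemma A_succ_zero (a b : ℕ+) (n : ℕ) :
    A a b (n+1) 0 = appendEntry a (X a b n 0) := by
  rw [A, X]
  show harmRev [] (alt2 a b (n+1)) = appendEntry a (harmRev [] (b :: alt2 a b (n-0)))
  rw [harmRev_nil, harmRev_nil, appendEntry_single]
  congr 1
  rw [alt2_reverse, List.reverse_cons, alt2_reverse, Nat.sub_zero, alt2_append]
  simp

lemma A_succ_last (a b : ℕ+) (n : ℕ) :
    A a b (n+1) (n+1) = appendEntry b (Y a b n n) := by
  rw [A, Y, Nat.sub_self, Nat.sub_self]
  show harmRev (b :: a :: alt2 b a n) [] = appendEntry b (harmRev (a :: alt2 b a n) [])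
  rw [harmRev_cons_nil, harmRev_cons_nil, appendEntry_single]
  congr 1
  show (alt2 b a (n+1)).reverse = _
  rw [alt2_reverse, alt2_append]
  simp [alt2_reverse]

lemma A_succ_mid (a b : ℕ+) {n j : ℕ} (h : j < n) :
    A a b (n+1) (j+1) =
      appendEntry b (Y a b n j) + appendEntry a (X a b n (j+1)) +
        appendEntry (a+b) (B a b n j) := by
  obtain ⟨m, rfl⟩ : ∃ m, n = j + 1 + m := ⟨n - j - 1, by omega⟩
  rw [A, Y, X, B]
  have h1 : j + 1 + m + 1 - (j + 1) = m + 1 := by omega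
  have h2 : j + 1 + m - j = m + 1 := by omega
  have h3 : j + 1 + m - (j + 1) = m := by omega
  have h4 : j + 1 + m - 1 - j = m := by omega
  rw [h1, h2, h3, h4]
  show harmRev (b :: (a :: alt2 b a j)) (a :: (b :: alt2 a b m)) = _
  rw [harmRev_cons_cons, add_comm b a]
  rfl

lemma B_succ (a b : ℕ+) (n j : ℕ) :
    B a b (n+1) j =
      appendEntry a (X a b n j) + appendEntry b (Y a b n j) +
        appendEntry (a+b) (A a b n j) := by
  rw [B, X, Y, A]
  have h1 : n + 1 - 1 - j = n - j := by omega
  rw [h1, harmRev_cons_cons]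

noncomputable def S (a b : ℕ+) (n : ℕ) : IndexSpace :=
  (∑ j ∈ Finset.range (n+1), A a b n j) - ∑ j ∈ Finset.range n, B a b n j

lemma S_succ (a b : ℕ+) (n : ℕ) :
    S a b (n+1) = - appendEntry (a+b) (S a b n) := by
  rw [S, S, appendEntry_sub, neg_sub,
    Finset.sum_range_succ' (fun j => A a b (n+1) j) (n+1),
    Finset.sum_range_succ (fun j => A a b (n+1) (j+1)) n,
    A_succ_zero, A_succ_last,
    Finset.sum_congr rfl (fun j hj => A_succ_mid a b (Finset.mem_range.mp hj)),
    Finset.sum_congr rfl (fun j (hj : j ∈ Finset.range (n+1)) => B_succ a b n j),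
    Finset.sum_add_distrib, Finset.sum_add_distrib,
    Finset.sum_add_distrib, Finset.sum_add_distrib,
    ← appendEntry_sum (a+b) (Finset.range n) (fun j => B a b n j),
    ← appendEntry_sum (a+b) (Finset.range (n+1)) (fun j => A a b n j),
    Finset.sum_range_succ' (fun j => appendEntry a (X a b n j)) n,
    Finset.sum_range_succ (fun j => appendEntry b (Y a b n j)) n]
  abel

lemma S_closed (a b : ℕ+) (n : ℕ) :
    S a b n = (-1 : ℚ) ^ n • Finsupp.single (List.replicate n (a + b)) 1 := by
  induction n with
  | zero => simp [S, A, alt2, harmRev_nil]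
  | succ n ih =>
    rw [S_succ, ih, appendEntry_smul, appendEntry_single, ← List.replicate_succ',
      pow_succ, mul_neg_one, neg_smul]

end S18

namespace S18

lemma sum_even_odd {M : Type*} [AddCommMonoid M] (f : ℕ → M) (n : ℕ) :
    ∑ i ∈ Finset.range (2*n+1), f i
      = (∑ j ∈ Finset.range (n+1), f (2*j)) + ∑ j ∈ Finset.range n, f (2*j+1) := by
  induction n with
  | zero => simp
  | succ n ih =>
    have h : 2*(n+1)+1 = (2*n+1)+1+1 := by ring
    rw [h, Finset.sum_range_succ, Finset.sum_range_succ, ih,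
        Finset.sum_range_succ (fun j => f (2*j)) (n+1),
        Finset.sum_range_succ (fun j => f (2*j+1)) n,
        show 2*(n+1) = 2*n+1+1 from by ring]
    abel

lemma alt2_sum (x y : ℕ+) (n : ℕ) :
    (List.map (fun t : ℕ+ => (t : ℕ)) (alt2 x y n)).sum = n * ((x:ℕ) + y) := by
  induction n with
  | zero => simp [alt2]
  | succ n ih =>
    show (List.map (fun t : ℕ+ => (t : ℕ)) (x :: y :: alt2 x y n)).sum = _
    rw [List.map_cons, List.map_cons, List.sum_cons, List.sum_cons, ih]
    ring

end S18

theorem stmt18 (a b : ℕ+) (ha : Odd (a : ℕ)) (hb : Odd (b : ℕ)) (n : ℕ) :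
    I0 (alt2 a b n) = (-1 : ℚ) ^ n • Finsupp.single (List.replicate n (a + b)) 1 := by
  have hI0 : I0 (alt2 a b n) = ∑ i ∈ Finset.range (2*n+1),
      ((-1:ℚ) ^ ((List.map (fun x : ℕ+ => (x:ℕ)) ((alt2 a b n).drop i)).sum)) •
        harm ((alt2 a b n).take i) (((alt2 a b n).drop i).reverse) := by
    rw [I0, S18.alt2_length]
    refine Finset.sum_congr rfl fun i _ => ?_
    congr 2
    simp only [List.bind_eq_flatMap, List.pure_def, ← List.map_eq_flatMap, List.map_id']
  rw [hI0, S18.sum_even_odd, ← S18.S_closed]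
  have hab : Even ((a:ℕ) + b) := ha.add_odd hb
  have heven : ∀ j ∈ Finset.range (n+1),
      ((-1:ℚ) ^ ((List.map (fun x : ℕ+ => (x:ℕ)) ((alt2 a b n).drop (2*j))).sum)) •
        harm ((alt2 a b n).take (2*j)) (((alt2 a b n).drop (2*j)).reverse)
        = S18.A a b n j := by
    intro j hj
    have hj' : j ≤ n := by have := Finset.mem_range.mp hj; omega
    rw [S18.alt2_drop_even a b hj', S18.alt2_take_even a b hj',
      harm, List.reverse_reverse, S18.alt2_reverse]
    have he : Even ((List.map (fun x : ℕ+ => (x:ℕ)) (alt2 a b (n-j))).sum) := by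
      rw [S18.alt2_sum]; exact hab.mul_left _
    rw [he.neg_one_pow, one_smul, S18.A]
  have hodd : ∀ j ∈ Finset.range n,
      ((-1:ℚ) ^ ((List.map (fun x : ℕ+ => (x:ℕ)) ((alt2 a b n).drop (2*j+1))).sum)) •
        harm ((alt2 a b n).take (2*j+1)) (((alt2 a b n).drop (2*j+1)).reverse)
        = - S18.B a b n j := by
    intro j hj
    have hj' : j < n := Finset.mem_range.mp hj
    rw [S18.alt2_drop_odd a b hj', S18.alt2_take_odd a b hj',
      harm, List.reverse_reverse]
    have ho : Odd ((List.map (fun x : ℕ+ => (x:ℕ)) (b :: alt2 a b (n-j-1))).sum) := by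
      rw [List.map_cons, List.sum_cons, S18.alt2_sum]
      exact hb.add_even (hab.mul_left _)
    rw [ho.neg_one_pow, neg_one_smul]
    congr 1
    rw [S18.B]
    congr 2
    · rw [List.reverse_append, S18.alt2_reverse]
      rfl
    · congr 1
      omega
  rw [Finset.sum_congr rfl heven, Finset.sum_congr rfl hodd,
    Finset.sum_neg_distrib, ← sub_eq_add_neg, ← S18.S]
end
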